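/- arXiv:1307.7979 — 6 statements merged into one kernel-verified Lean document; each statement's English description precedes it below -/
import Mathlib

section
/- Let ρ : h → g be a Lie algebra homomorphism and suppose ρ_t = ρ + tξ + t²η + o(t³) is a smooth family of Lie algebra homomorphisms. Then [ξ(u), ξ(v)] = −(δ_ρ η)(u,v) for all u,v ∈ h; in particular the Kuranishi class Φ(ξ) = [½[ξ,ξ]] ∈ H²(h,g) vanishes. -/
open Asymptotics Filter

lemma aux_pow_smul {V : Type*} [NormedAddCommGroup V] [NormedSpace ℝ V]
    (n : ℕ) (c : V) (h : (fun t : ℝ => t ^ n • c) =o[nhds (0:ℝ)] fun t => t ^ n) :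
    c = 0 := by
  by_contra hc
  have hc' : 0 < ‖c‖ := norm_pos_iff.mpr hc
  have h2 : ∀ᶠ t in nhdsWithin (0:ℝ) {0}ᶜ, ‖t ^ n • c‖ ≤ ‖c‖/2 * ‖t ^ n‖ :=
    (h.def (half_pos hc')).filter_mono nhdsWithin_le_nhds
  have h3 : ∀ᶠ t in nhdsWithin (0:ℝ) {0}ᶜ, t ≠ 0 := eventually_mem_nhdsWithin
  obtain ⟨t, ht, htne⟩ := (h2.and h3).exists
  have hpos : 0 < ‖t ^ n‖ := norm_pos_iff.mpr (pow_ne_zero n htne)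
  rw [norm_smul] at ht
  nlinarith

lemma poly2_eq_zero {V : Type*} [NormedAddCommGroup V] [NormedSpace ℝ V]
    (c0 c1 c2 : V)
    (h : (fun t : ℝ => c0 + t • c1 + t ^ 2 • c2) =o[nhds (0:ℝ)] fun t => t ^ 2) :
    c0 = 0 ∧ c1 = 0 ∧ c2 = 0 := by
  have hc0 : c0 = 0 := by
    have := (h.def one_pos).self_of_nhds
    simpa using this
  subst hc0
  have hO2 : (fun t : ℝ => t ^ 2 • c2) =O[nhds (0:ℝ)] fun t => t ^ 2 :=
    isBigO_iff.mpr ⟨‖c2‖, Eventually.of_forall fun t => by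
      rw [norm_smul]; ring_nf; exact le_rfl⟩
  have h21 : (fun t : ℝ => t ^ 2) =o[nhds (0:ℝ)] fun t : ℝ => t ^ 1 :=
    isLittleO_pow_pow one_lt_two
  have hc1 : c1 = 0 := by
    have h1 : (fun t : ℝ => t • c1) =o[nhds (0:ℝ)] fun t => t ^ 1 := by
      have := (h.trans h21).sub
        (hO2.trans_isLittleO h21)
      simpa using this
    exact aux_pow_smul 1 c1 (by simpa using h1)
  subst hc1
  have hc2 : c2 = 0 := by
    have h2 : (fun t : ℝ => t ^ 2 • c2) =o[nhds (0:ℝ)] fun t => t ^ 2 := by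
      simpa using h
    exact aux_pow_smul 2 c2 h2
  exact ⟨rfl, rfl, hc2⟩

lemma bilin_bound {V : Type*} [NormedAddCommGroup V] [NormedSpace ℝ V]
    [FiniteDimensional ℝ V] (b : V →ₗ[ℝ] V →ₗ[ℝ] V) :
    ∃ C : ℝ, 0 ≤ C ∧ ∀ x y, ‖b x y‖ ≤ C * ‖x‖ * ‖y‖ := by
  let B : V →L[ℝ] V →L[ℝ] V := LinearMap.toContinuousLinearMap
    (((LinearMap.toContinuousLinearMap :
        (V →ₗ[ℝ] V) ≃ₗ[ℝ] (V →L[ℝ] V)).toLinearMap) ∘ₗ b)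
  refine ⟨‖B‖, norm_nonneg B, fun x y => ?_⟩
  have h := B.le_opNorm₂ x y
  have hBxy : B x y = b x y := by simp [B]
  rwa [hBxy] at h

lemma bilin_littleO_left {V : Type*} [NormedAddCommGroup V] [NormedSpace ℝ V]
    [FiniteDimensional ℝ V] (b : V →ₗ[ℝ] V →ₗ[ℝ] V) (f g : ℝ → V) (y : V)
    (hf : f =o[nhds (0:ℝ)] fun t : ℝ => t ^ 2)
    (hg : Tendsto g (nhds (0:ℝ)) (nhds y)) :
    (fun t => b (f t) (g t)) =o[nhds (0:ℝ)] fun t : ℝ => t ^ 2 := by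
  obtain ⟨C, hC0, hC⟩ := bilin_bound b
  have hgb : ∀ᶠ t in nhds (0:ℝ), ‖g t‖ ≤ ‖y‖ + 1 :=
    (hg.norm.eventually_lt_const (lt_add_one ‖y‖)).mono fun t ht => ht.le
  have hO : (fun t => b (f t) (g t)) =O[nhds (0:ℝ)] f := isBigO_iff.mpr
    ⟨C * (‖y‖ + 1), by
      filter_upwards [hgb] with t ht
      have h1 := hC (f t) (g t)
      have h2 : C * ‖f t‖ * ‖g t‖ ≤ C * (‖y‖ + 1) * ‖f t‖ := by
        nlinarith [mul_le_mul_of_nonneg_left ht (mul_nonneg hC0 (norm_nonneg (f t)))]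
      linarith⟩
  exact hO.trans_isLittleO hf

lemma bilin_littleO_right {V : Type*} [NormedAddCommGroup V] [NormedSpace ℝ V]
    [FiniteDimensional ℝ V] (b : V →ₗ[ℝ] V →ₗ[ℝ] V) (f g : ℝ → V) (y : V)
    (hf : f =o[nhds (0:ℝ)] fun t : ℝ => t ^ 2)
    (hg : Tendsto g (nhds (0:ℝ)) (nhds y)) :
    (fun t => b (g t) (f t)) =o[nhds (0:ℝ)] fun t : ℝ => t ^ 2 := by
  obtain ⟨C, hC0, hC⟩ := bilin_bound b
  have hgb : ∀ᶠ t in nhds (0:ℝ), ‖g t‖ ≤ ‖y‖ + 1 :=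
    (hg.norm.eventually_lt_const (lt_add_one ‖y‖)).mono fun t ht => ht.le
  have hO : (fun t => b (g t) (f t)) =O[nhds (0:ℝ)] f := isBigO_iff.mpr
    ⟨C * (‖y‖ + 1), by
      filter_upwards [hgb] with t ht
      have h1 := hC (g t) (f t)
      have h2 : C * ‖g t‖ * ‖f t‖ ≤ C * (‖y‖ + 1) * ‖f t‖ := by
        nlinarith [mul_le_mul_of_nonneg_left ht (mul_nonneg hC0 (norm_nonneg (f t))),
          mul_le_mul_of_nonneg_right ht (mul_nonneg hC0 (norm_nonneg (f t))),
          norm_nonneg (f t), norm_nonneg (g t)]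
      linarith⟩
  exact hO.trans_isLittleO hf

lemma pow_smul_littleO {V : Type*} [NormedAddCommGroup V] [NormedSpace ℝ V]
    (n : ℕ) (hn : 2 < n) (x : V) :
    (fun t : ℝ => t ^ n • x) =o[nhds (0:ℝ)] fun t : ℝ => t ^ 2 := by
  have hO : (fun t : ℝ => t ^ n • x) =O[nhds (0:ℝ)] fun t : ℝ => t ^ n :=
    isBigO_iff.mpr ⟨‖x‖, Eventually.of_forall fun t => by
      rw [norm_smul]; ring_nf; exact le_rfl⟩
  exact hO.trans_isLittleO (isLittleO_pow_pow hn)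

/-- If `ρ_t = ρ + tξ + t²η + o(t²)` is a family of Lie algebra
homomorphisms `h → g`, then `[ξ(u), ξ(v)] = -(δ_ρ η)(u,v)`; in particular the
Kuranishi class `[½[ξ,ξ]] ∈ H²(h,g)` vanishes. -/
theorem kuranishi_obstruction_of_homomorphism_deformation
    {W V : Type*}
    [NormedAddCommGroup W] [NormedSpace ℝ W] [FiniteDimensional ℝ W]
    [NormedAddCommGroup V] [NormedSpace ℝ V] [FiniteDimensional ℝ V]
    (bH : W →ₗ[ℝ] W →ₗ[ℝ] W) (bG : V →ₗ[ℝ] V →ₗ[ℝ] V)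
    (hskewH : ∀ u v, bH u v = - bH v u)
    (hjacH : ∀ u v w, bH (bH u v) w + bH (bH v w) u + bH (bH w u) v = 0)
    (hskewG : ∀ x y, bG x y = - bG y x)
    (hjacG : ∀ x y z, bG (bG x y) z + bG (bG y z) x + bG (bG z x) y = 0)
    (ρt : ℝ → W →ₗ[ℝ] V)
    (hhom : ∀ t u v, ρt t (bH u v) = bG (ρt t u) (ρt t v))
    (ρ : W →ₗ[ℝ] V) (h0 : ρt 0 = ρ)
    (ξ η : W → V)
    (hTaylor : ∀ u,
      (fun t : ℝ => ρt t u - (ρ u + t • ξ u + t ^ 2 • η u)) =o[nhds (0 : ℝ)] fun t => t ^ 2) :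
    ∀ u v, bG (ξ u) (ξ v) = -(bG (ρ u) (η v) - bG (ρ v) (η u) - η (bH u v)) := by
  intro u v
  have hew := hTaylor (bH u v)
  have heu := hTaylor u
  have hev := hTaylor v
  have hpolyu : Filter.Tendsto (fun t : ℝ => ρ u + t • ξ u + t ^ 2 • η u)
      (nhds 0) (nhds (ρ u)) := by
    have hc : Continuous fun t : ℝ => ρ u + t • ξ u + t ^ 2 • η u := by fun_prop
    simpa using hc.tendsto 0
  have hρv : Filter.Tendsto (fun t : ℝ => ρt t v) (nhds (0:ℝ)) (nhds (ρ v)) := by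
    have hev0 : Filter.Tendsto (fun t : ℝ => ρt t v - (ρ v + t • ξ v + t ^ 2 • η v))
        (nhds 0) (nhds 0) := by
      refine hev.isBigO.trans_tendsto ?_
      have hc : Continuous fun t : ℝ => t ^ 2 := by fun_prop
      simpa using hc.tendsto 0
    have hpolyv : Filter.Tendsto (fun t : ℝ => ρ v + t • ξ v + t ^ 2 • η v)
        (nhds 0) (nhds (ρ v)) := by
      have hc : Continuous fun t : ℝ => ρ v + t • ξ v + t ^ 2 • η v := by fun_prop
      simpa using hc.tendsto 0
    have := hev0.add hpolyv
    simpa using this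
  have key : (fun t : ℝ => (ρ (bH u v) - bG (ρ u) (ρ v))
        + t • (ξ (bH u v) - bG (ξ u) (ρ v) - bG (ρ u) (ξ v))
        + t ^ 2 • (η (bH u v) - bG (η u) (ρ v) - bG (ξ u) (ξ v) - bG (ρ u) (η v))) =
      fun t : ℝ =>
        (-(ρt t (bH u v) - (ρ (bH u v) + t • ξ (bH u v) + t ^ 2 • η (bH u v)))
        + bG (ρt t u - (ρ u + t • ξ u + t ^ 2 • η u)) (ρt t v))
        + bG (ρ u + t • ξ u + t ^ 2 • η u) (ρt t v - (ρ v + t • ξ v + t ^ 2 • η v))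
        + t ^ 3 • (bG (ξ u) (η v) + bG (η u) (ξ v))
        + t ^ 4 • bG (η u) (η v) := by
    funext t
    have h := hhom t u v
    simp only [map_add, map_sub, map_smul, LinearMap.add_apply, LinearMap.sub_apply,
      LinearMap.smul_apply]
    rw [h]
    module
  have ho : (fun t : ℝ => (ρ (bH u v) - bG (ρ u) (ρ v))
        + t • (ξ (bH u v) - bG (ξ u) (ρ v) - bG (ρ u) (ξ v))
        + t ^ 2 • (η (bH u v) - bG (η u) (ρ v) - bG (ξ u) (ξ v) - bG (ρ u) (η v)))
      =o[nhds (0:ℝ)] fun t => t ^ 2 := by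
    rw [key]
    exact (((hew.neg_left.add (bilin_littleO_left bG _ _ (ρ v) heu hρv)).add
      (bilin_littleO_right bG _ _ (ρ u) hev hpolyu)).add
      (pow_smul_littleO 3 (by norm_num) _)).add (pow_smul_littleO 4 (by norm_num) _)
  obtain ⟨-, -, hc2⟩ := poly2_eq_zero _ _ _ ho
  have hs : bG (η u) (ρ v) = -bG (ρ v) (η u) := hskewG _ _
  rw [hs] at hc2
  rw [← sub_eq_zero]
  have habel : bG (ξ u) (ξ v) - -(bG (ρ u) (η v) - bG (ρ v) (η u) - η (bH u v)) =
      -(η (bH u v) - -bG (ρ v) (η u) - bG (ξ u) (ξ v) - bG (ρ u) (η v)) := by abel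
  rw [habel, hc2, neg_zero]
end

section
/- Let h ⊂ g be a Lie subalgebra, and let a_t ∈ GL(g) be a smooth family with a_0 = id such that h_t := a_t(h) is a Lie subalgebra of g for every t. Then the map η : h → g/h, η(u) = (da_0/dt)(u) mod h, is a 1-cocycle for the representation of h on g/h induced by the adjoint representation: for all u,v ∈ h, (−(da_0/dt)[u,v] + [(da_0/dt)(u), v] + [u, (da_0/dt)(v)]) ∈ h. -/
set_option synthInstance.maxHeartbeats 1000000
set_option maxHeartbeats 1000000


/-- If `a_t ∈ GL(g)` is a smooth family with `a_0 = id` such that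
`h_t = a_t(h)` is a Lie subalgebra for every `t`, then `u ↦ (da_0/dt)(u) mod h` is a
1-cocycle of `h` with coefficients in `g/h`: for all `u, v ∈ h`,
`-(da_0/dt)[u,v] + [(da_0/dt)u, v] + [u, (da_0/dt)v] ∈ h`. -/
theorem velocity_of_subalgebra_deformation_is_cocycle
    {V : Type*} [NormedAddCommGroup V] [NormedSpace ℝ V] [FiniteDimensional ℝ V]
    (b : V →ₗ[ℝ] V →ₗ[ℝ] V)
    (hskew : ∀ u v, b u v = - b v u)
    (hjac : ∀ u v w, b (b u v) w + b (b v w) u + b (b w u) v = 0)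
    (h : Submodule ℝ V)
    (hsub : ∀ u ∈ h, ∀ v ∈ h, b u v ∈ h)
    (a : ℝ → V →ₗ[ℝ] V)
    (ha0 : a 0 = LinearMap.id)
    (habij : ∀ t, Function.Bijective (a t))
    (hsubt : ∀ t, ∀ u ∈ h.map (a t), ∀ v ∈ h.map (a t), b u v ∈ h.map (a t))
    (d : V → V)
    (hd : ∀ u, HasDerivAt (fun t => a t u) (d u) 0) :
    ∀ u ∈ h, ∀ v ∈ h, - d (b u v) + b (d u) v + b u (d v) ∈ h := by
  classical
  intro u hu v hv
  -- continuous versions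
  let tCLM : (V →ₗ[ℝ] V) ≃ₗ[ℝ] (V →L[ℝ] V) := LinearMap.toContinuousLinearMap
  let b2 : V →L[ℝ] V →L[ℝ] V :=
    LinearMap.toContinuousLinearMap (tCLM.toLinearMap.comp b)
  have hb2 : ∀ x y, b2 x y = b x y := fun _ _ => rfl
  let A : ℝ → (V →L[ℝ] V) := fun t => tCLM (a t)
  have hA : ∀ t x, A t x = a t x := fun _ _ => rfl
  have hA0 : A 0 = 1 := by
    ext x; simp [hA, ha0]
  -- derivative of A as a map into the operator space, via a basis
  let n := Module.finrank ℝ V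
  let e : Module.Basis (Fin n) ℝ V := Module.finBasis ℝ V
  let Φ : (Fin n → V) →L[ℝ] (V →L[ℝ] V) :=
    LinearMap.toContinuousLinearMap (tCLM.toLinearMap.comp ((e.constr ℝ : (Fin n → V) ≃ₗ[ℝ] (V →ₗ[ℝ] V)).toLinearMap))
  have hΦA : ∀ t, A t = Φ (fun i => a t (e i)) := by
    intro t
    have : e.constr ℝ (fun i => a t (e i)) = a t := by
      apply e.ext
      intro i
      simp [Module.Basis.constr_basis]
    show tCLM (a t) = tCLM (e.constr ℝ (fun i => a t (e i)))
    rw [this]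
  set D : V →L[ℝ] V := Φ (fun i => d (e i)) with hDdef
  have hAderiv : HasDerivAt A D 0 := by
    have h1 : HasDerivAt (fun t => (fun i => a t (e i))) (fun i => d (e i)) 0 :=
      hasDerivAt_pi.2 fun i => hd (e i)
    have h2 := Φ.hasFDerivAt.comp_hasDerivAt 0 h1
    have : (fun t => Φ (fun i => a t (e i))) = A := by
      funext t; exact (hΦA t).symm
    rwa [Function.comp_def, this] at h2
  have hD : ∀ x, D x = d x := by
    intro x
    have hx := (ContinuousLinearMap.apply ℝ V x).hasFDerivAt.comp_hasDerivAt 0 hAderiv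
    have hx' : HasDerivAt (fun t => a t x) (D x) 0 := hx
    exact hx'.unique (hd x)
  -- units
  let ut : ℝ → (V →L[ℝ] V)ˣ := fun t =>
    ((LinearEquiv.ofBijective (a t) (habij t)).toContinuousLinearEquiv).toUnit
  have hut : ∀ t, (ut t : V →L[ℝ] V) = A t := by
    intro t; ext x; rfl
  -- derivative of the inverse family
  have h1 : HasFDerivAt Ring.inverse
      (-(ContinuousLinearMap.mulLeftRight ℝ (V →L[ℝ] V) 1 1)) (A 0) := by
    rw [hA0]
    simpa using hasFDerivAt_ringInverse (𝕜 := ℝ) (R := V →L[ℝ] V) 1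
  have hB : HasDerivAt (fun t => Ring.inverse (A t)) (-D) 0 := by
    have h2 := h1.comp_hasDerivAt 0 hAderiv
    simpa [Function.comp_def] using h2
  -- derivative of t ↦ b (a t u) (a t v)
  have hf : HasDerivAt (fun t => b2 (a t u) (a t v)) (b2 (d u) v + b2 u (d v)) 0 := by
    have h1' : HasDerivAt (fun t => b2 (a t u)) (b2 (d u)) 0 :=
      b2.hasFDerivAt.comp_hasDerivAt 0 (hd u)
    have h2 := h1'.clm_apply (hd v)
    simpa [ha0] using h2
  -- derivative of the corrected curve
  have hc : HasDerivAt (fun t => Ring.inverse (A t) (b2 (a t u) (a t v)))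
      (- d (b u v) + (b (d u) v + b u (d v))) 0 := by
    have h2 := hB.clm_apply hf
    have e0 : Ring.inverse (A 0) = (1 : V →L[ℝ] V) := by rw [hA0, Ring.inverse_one]
    have e1 : b2 (a 0 u) (a 0 v) = b u v := by simp [hb2, ha0]
    rw [e0, e1] at h2
    simpa [hb2, hD] using h2
  -- the curve lies in h
  have hmem : ∀ t, Ring.inverse (A t) (b2 (a t u) (a t v)) ∈ h := by
    intro t
    obtain ⟨w, hw, hweq⟩ :=
      hsubt t _ (Submodule.mem_map_of_mem hu) _ (Submodule.mem_map_of_mem hv)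
    have key : Ring.inverse (A t) (b2 (a t u) (a t v)) = w := by
      have : b2 (a t u) (a t v) = A t w := by rw [hb2, ← hweq]; rfl
      rw [this, ← hut t, Ring.inverse_unit]
      calc (↑(ut t)⁻¹ : V →L[ℝ] V) ((↑(ut t) : V →L[ℝ] V) w)
          = ((↑(ut t)⁻¹ * ↑(ut t) : V →L[ℝ] V)) w := rfl
        _ = w := by rw [(ut t).inv_mul]; rfl
    rw [key]; exact hw
  -- closedness argument
  have hclosed : IsClosed (h : Set V) := Submodule.closed_of_finiteDimensional h
  have key := hasDerivAt_iff_tendsto_slope.1 hc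
  have hmem' : - d (b u v) + (b (d u) v + b u (d v)) ∈ h := by
    refine hclosed.mem_of_tendsto key ?_
    filter_upwards with t
    rw [slope_def_module]
    exact h.smul_mem _ (h.sub_mem (hmem t) (hmem 0))
  rwa [← add_assoc] at hmem'
end

section
/- Let h ⊂ g be a Lie subalgebra, σ : g/h → g a linear splitting of the projection π : g → g/h, and η ∈ Z¹(h, g/h) a 1-cocycle. Then the 2-cochain Ω_σ(η) := δ(σ∘η) ∈ Hom(Λ²h, g), a priori valued in g, actually takes values in h, and as an element of Hom(Λ²h, h) it is a 2-cocycle for the adjoint representation of h on itself. -/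
/-- The 2-cochain `Ω_σ(η) = δ(σ∘η) : Λ²h → g` associated to a splitting `σ` and a
1-cochain `η : h → g/h`. -/
def OmegaSigma {L : Type*} [LieRing L] [LieAlgebra ℝ L] (K : LieSubalgebra ℝ L)
    (σ : (L ⧸ K.toSubmodule) →ₗ[ℝ] L)
    (η : K →ₗ[ℝ] L ⧸ K.toSubmodule) : K → K → L :=
  fun u v => ⁅(u : L), σ (η v)⁆ - ⁅(v : L), σ (η u)⁆ - σ (η ⁅u, v⁆)

/-- For a Lie subalgebra `h ⊂ g`, a splitting `σ : g/h → g` of the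
projection, and a 1-cocycle `η ∈ Z¹(h, g/h)`, the 2-cochain `Ω_σ(η) = δ(σ∘η)` takes
values in `h`, and (viewed in `Hom(Λ²h, h)`) it is a 2-cocycle for the adjoint
representation of `h`. -/
theorem omega_sigma_valued_in_h_and_is_cocycle
    {L : Type*} [LieRing L] [LieAlgebra ℝ L]
    (K : LieSubalgebra ℝ L)
    (σ : (L ⧸ K.toSubmodule) →ₗ[ℝ] L)
    (hσ : ∀ q, K.toSubmodule.mkQ (σ q) = q)
    (η : K →ₗ[ℝ] L ⧸ K.toSubmodule)
    (hcoc : ∀ u v : K,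
      η ⁅u, v⁆ = K.toSubmodule.mkQ ⁅(u : L), σ (η v)⁆ - K.toSubmodule.mkQ ⁅(v : L), σ (η u)⁆) :
    (∀ u v : K, OmegaSigma K σ η u v ∈ K) ∧
    (∀ u v w : K,
      ⁅(u : L), OmegaSigma K σ η v w⁆ - ⁅(v : L), OmegaSigma K σ η u w⁆ +
      ⁅(w : L), OmegaSigma K σ η u v⁆ - OmegaSigma K σ η ⁅u, v⁆ w +
      OmegaSigma K σ η ⁅u, w⁆ v - OmegaSigma K σ η ⁅v, w⁆ u = 0) := by
  constructor
  · intro u v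
    have h : K.toSubmodule.mkQ (OmegaSigma K σ η u v) = 0 := by
      simp [OmegaSigma, map_sub, hσ, hcoc u v]
    simpa [Submodule.Quotient.mk_eq_zero] using
      (Submodule.Quotient.mk_eq_zero K.toSubmodule).mp h
  · intro u v w
    have flip : ∀ a b : K, ⁅a, b⁆ = -⁅b, a⁆ := fun a b => (lie_skew a b).symm
    have hK : (⁅⁅u, v⁆, w⁆ : K) - ⁅⁅u, w⁆, v⁆ + ⁅⁅v, w⁆, u⁆ = 0 := by
      have j := lie_jacobi u v w
      have j2 : (⁅v, ⁅w, u⁆⁆ : K) = -⁅v, ⁅u, w⁆⁆ := by rw [flip w u, lie_neg]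
      rw [flip ⁅u, v⁆ w, flip ⁅u, w⁆ v, flip ⁅v, w⁆ u]
      linear_combination (norm := abel) -j + j2
    have hφ0 : σ (η (⁅⁅u, v⁆, w⁆ - ⁅⁅u, w⁆, v⁆ + ⁅⁅v, w⁆, u⁆)) = 0 := by
      rw [hK]; simp
    have hφ : σ (η ⁅⁅u, v⁆, w⁆) - σ (η ⁅⁅u, w⁆, v⁆) + σ (η ⁅⁅v, w⁆, u⁆) = 0 := by
      simpa [map_sub, map_add] using hφ0
    simp only [OmegaSigma, LieSubalgebra.coe_bracket, lie_sub, sub_lie]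
    linear_combination (norm := abel) -(lie_lie (u : L) v (σ (η w))) +
      lie_lie (u : L) w (σ (η v)) - lie_lie (v : L) w (σ (η u)) + hφ
end

section
/- Let h ⊂ g be a Lie subalgebra, σ : g/h → g a splitting, and η_t ∈ Hom(h, g/h) a smooth family with η_0 = 0 and expansion η_t = tη + t²ρ + o(t³), such that the graph {x + σ(η_t(x)) : x ∈ h} is a Lie subalgebra of g for all t. Then η is a 1-cocycle in Z¹(h, g/h) and Φ_σ(η) = −δρ; in particular the Kuranishi class Φ(η) ∈ H²(h, g/h) vanishes. -/
open Asymptotics Filter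

section KurAux
variable {E : Type*} [NormedAddCommGroup E] [NormedSpace ℝ E]

lemma kur_eq_zero_of_smul_pow (a : E) (n : ℕ)
    (hyp : (fun t : ℝ => t ^ n • a) =o[nhds 0] fun t : ℝ => t ^ n) : a = 0 := by
  by_contra h0
  rw [Asymptotics.isLittleO_iff] at hyp
  have hpos : 0 < ‖a‖ := norm_pos_iff.2 h0
  have h2 : (0:ℝ) < ‖a‖ / 2 := by linarith
  have h3 := (hyp h2).filter_mono (nhdsWithin_le_nhds (s := {(0:ℝ)}ᶜ))
  obtain ⟨t, ht, htm⟩ := (h3.and eventually_mem_nhdsWithin).exists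
  have htne : t ≠ 0 := htm
  have h4 : ‖t ^ n‖ * ‖a‖ ≤ ‖a‖ / 2 * ‖t ^ n‖ := by
    simpa [norm_smul] using ht
  have h5 : 0 < ‖t ^ n‖ := norm_pos_iff.2 (pow_ne_zero n htne)
  nlinarith

lemma kur_coeff_extract (a c : E)
    (hyp : (fun t : ℝ => t • a + t ^ 2 • c) =o[nhds 0] fun t : ℝ => t ^ 2) :
    a = 0 ∧ c = 0 := by
  have hc2 : (fun t : ℝ => t ^ 2 • c) =o[nhds 0] fun t : ℝ => t ^ 1 :=
    ((isLittleO_pow_pow (by norm_num : 1 < 2)).smul_isBigO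
      (isBigO_const_const c (one_ne_zero (α := ℝ)) _)).congr (fun _ => rfl) (fun t => by simp)
  have ha : a = 0 := by
    have h1 : (fun t : ℝ => t • a + t ^ 2 • c) =o[nhds 0] fun t : ℝ => t ^ 1 :=
      hyp.trans (isLittleO_pow_pow (by norm_num : 1 < 2))
    have h2 : (fun t : ℝ => t ^ 1 • a) =o[nhds 0] fun t : ℝ => t ^ 1 := by
      have := h1.sub hc2
      exact this.congr (fun t => by simp) (fun t => rfl)
    exact kur_eq_zero_of_smul_pow a 1 h2
  refine ⟨ha, ?_⟩
  subst ha
  exact kur_eq_zero_of_smul_pow c 2 (hyp.congr (fun t => by simp) fun t => rfl)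

lemma kur_smul_const_isBigO (c : E) (p : ℝ → ℝ) {l : Filter ℝ} :
    (fun t : ℝ => p t • c) =O[l] p := by
  refine IsBigO.of_bound ‖c‖ (Eventually.of_forall fun t => ?_)
  rw [norm_smul]
  exact le_of_eq (mul_comm _ _)

end KurAux

set_option maxHeartbeats 4000000 in
/-- If `η_t = tη + t²ρ + o(t²)` is a family in `Hom(h, g/h)` with
`η_0 = 0` whose graphs `{x + σ(η_t(x))}` are Lie subalgebras of `g` for all `t`, then
`η` is a 1-cocycle in `Z¹(h, g/h)` and `Φ_σ(η) = -δρ`, so the Kuranishi class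
`Φ(η) ∈ H²(h, g/h)` vanishes. -/
theorem graph_deformation_velocity_cocycle_and_kuranishi_vanishes
    {V : Type*} [NormedAddCommGroup V] [NormedSpace ℝ V] [FiniteDimensional ℝ V]
    (b : V →ₗ[ℝ] V →ₗ[ℝ] V)
    (hskew : ∀ u v, b u v = - b v u)
    (hjac : ∀ u v w, b (b u v) w + b (b v w) u + b (b w u) v = 0)
    (h : Submodule ℝ V)
    (hsub : ∀ u ∈ h, ∀ v ∈ h, b u v ∈ h)
    (σ : (V ⧸ h) →ₗ[ℝ] V)
    (hσ : ∀ q, h.mkQ (σ q) = q)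
    (hproj : ∀ x : V, x - σ (h.mkQ x) ∈ h)
    (ηt : ℝ → (h →ₗ[ℝ] V ⧸ h))
    (hη0 : ηt 0 = 0)
    (η ρ : h →ₗ[ℝ] V ⧸ h)
    (hTaylor : ∀ u : h,
      (fun t : ℝ => σ (ηt t u) - (t • σ (η u) + t ^ 2 • σ (ρ u)))
        =o[nhds (0 : ℝ)] fun t => t ^ 2)
    (hgraph : ∀ t : ℝ, ∀ x y : h, ∃ z : h,
      b ((x : V) + σ (ηt t x)) ((y : V) + σ (ηt t y)) = (z : V) + σ (ηt t z)) :
    (∀ u v : h,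
      η ⟨b u v, hsub u u.2 v v.2⟩ = h.mkQ (b u (σ (η v))) - h.mkQ (b v (σ (η u)))) ∧
    (∀ u v : h,
      h.mkQ (b (σ (η u)) (σ (η v))) -
        η ⟨(b (σ (η u)) v + b u (σ (η v))) -
            σ (h.mkQ (b (σ (η u)) v + b u (σ (η v)))), hproj _⟩ =
      -(h.mkQ (b u (σ (ρ v))) - h.mkQ (b v (σ (ρ u))) - ρ ⟨b u v, hsub u u.2 v v.2⟩)) := by
  classical
  -- bilinear bound
  obtain ⟨C, hC0, hC⟩ : ∃ C : ℝ, 0 ≤ C ∧ ∀ x y : V, ‖b x y‖ ≤ C * ‖x‖ * ‖y‖ := by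
    let L : V →ₗ[ℝ] (V →L[ℝ] V) :=
      { toFun := fun x => LinearMap.toContinuousLinearMap (b x)
        map_add' := fun x y => by ext w; simp
        map_smul' := fun c x => by ext w; simp }
    let Lc := LinearMap.toContinuousLinearMap L
    refine ⟨‖Lc‖, Lc.opNorm_nonneg, fun x y => ?_⟩
    have hb : b x y = Lc x y := by simp [Lc, L]
    rw [hb]
    calc ‖Lc x y‖ ≤ ‖Lc x‖ * ‖y‖ := (Lc x).le_opNorm y
      _ ≤ ‖Lc‖ * ‖x‖ * ‖y‖ :=
        mul_le_mul_of_nonneg_right (Lc.le_opNorm x) (norm_nonneg y)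
  -- bilinear asymptotics helpers
  have hbase : ∀ (f g : ℝ → V), (fun t => b (f t) (g t)) =O[nhds 0]
      fun t => ‖f t‖ * ‖g t‖ := by
    intro f g
    refine IsBigO.of_bound C (Eventually.of_forall fun t => ?_)
    have h1 := hC (f t) (g t)
    have h2 : ‖(‖f t‖ * ‖g t‖)‖ = ‖f t‖ * ‖g t‖ := by
      rw [Real.norm_eq_abs, abs_mul, abs_norm, abs_norm]
    rw [h2]; nlinarith [norm_nonneg (f t), norm_nonneg (g t)]
  have hbOO : ∀ {f g : ℝ → V} {p q : ℝ → ℝ}, f =O[nhds 0] p → g =O[nhds 0] q →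
      (fun t => b (f t) (g t)) =O[nhds 0] fun t => p t * q t := fun hf hg =>
    (hbase _ _).trans ((isBigO_norm_left.2 hf).mul (isBigO_norm_left.2 hg))
  have hbOo : ∀ {f g : ℝ → V} {p q : ℝ → ℝ}, f =O[nhds 0] p → g =o[nhds 0] q →
      (fun t => b (f t) (g t)) =o[nhds 0] fun t => p t * q t := fun hf hg =>
    (hbase _ _).trans_isLittleO
      ((isBigO_norm_left.2 hf).mul_isLittleO (isLittleO_norm_left.2 hg))
  have hboO : ∀ {f g : ℝ → V} {p q : ℝ → ℝ}, f =o[nhds 0] p → g =O[nhds 0] q →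
      (fun t => b (f t) (g t)) =o[nhds 0] fun t => p t * q t := fun hf hg =>
    (hbase _ _).trans_isLittleO
      ((isLittleO_norm_left.2 hf).mul_isBigO (isBigO_norm_left.2 hg))
  -- power comparisons at 0
  have ho32 : (fun t : ℝ => t * t ^ 2) =o[nhds 0] fun t : ℝ => t ^ 2 :=
    (isLittleO_pow_pow (by norm_num : 2 < 3)).congr (fun t => by ring) fun _ => rfl
  have ho32' : (fun t : ℝ => t ^ 2 * t) =o[nhds 0] fun t : ℝ => t ^ 2 :=
    (isLittleO_pow_pow (by norm_num : 2 < 3)).congr (fun t => by ring) fun _ => rfl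
  have hO21 : (fun t : ℝ => t ^ 2) =O[nhds 0] fun t : ℝ => t :=
    ((isLittleO_pow_pow (by norm_num : 1 < 2)).congr (fun _ => rfl)
      (fun t => pow_one t)).isBigO
  have ht1 : (fun t : ℝ => t) =O[nhds 0] fun _ : ℝ => (1:ℝ) :=
    (Filter.tendsto_id (x := nhds (0:ℝ))).isBigO_one ℝ
  -- projection
  obtain ⟨P, hP⟩ : ∃ P : V →L[ℝ] V, ∀ x, P x = σ (h.mkQ x) :=
    ⟨LinearMap.toContinuousLinearMap (σ ∘ₗ h.mkQ), fun x => by simp⟩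
  have hmk0 : ∀ x : h, h.mkQ (x : V) = 0 := fun x => by
    simpa using (Submodule.Quotient.mk_eq_zero h).2 x.2
  have hPmem : ∀ x : h, P (x : V) = 0 := fun x => by
    rw [hP, hmk0, map_zero]
  have hPP : ∀ x : V, h.mkQ (P x) = h.mkQ x := fun x => by rw [hP, hσ]
  -- Taylor in convenient forms
  have herr : ∀ x : h, (fun t : ℝ => σ (ηt t x) - t • σ (η x) - t ^ 2 • σ (ρ x))
      =o[nhds 0] fun t : ℝ => t ^ 2 := fun x =>
    (hTaylor x).congr (fun t => by abel) fun _ => rfl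
  have hrem : ∀ x : h, (fun t : ℝ => σ (ηt t x) - t • σ (η x))
      =O[nhds 0] fun t : ℝ => t ^ 2 := fun x => by
    have h1 := (herr x).isBigO.add (kur_smul_const_isBigO (σ (ρ x)) (fun t : ℝ => t ^ 2))
    exact h1.congr (fun t => by abel) fun _ => rfl
  have hFO : ∀ x : h, (fun t : ℝ => σ (ηt t x)) =O[nhds 0] fun t : ℝ => t := fun x => by
    have h1 := ((hrem x).trans hO21).add (kur_smul_const_isBigO (σ (η x)) (fun t : ℝ => t))
    exact h1.congr (fun t => by abel) fun _ => rfl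
  -- little-o transport through ηt for h-valued remainders
  have hsmall : ∀ r : ℝ → h, ((fun t => ((r t : V))) =o[nhds 0] fun t : ℝ => t ^ 2) →
      (fun t => σ (ηt t (r t))) =o[nhds 0] fun t : ℝ => t ^ 2 := by
    intro r hr
    have hrh : (fun t => r t) =o[nhds 0] fun t : ℝ => t ^ 2 := by
      rw [← isLittleO_norm_left] at hr ⊢
      exact hr
    set bas := Module.finBasis ℝ h with hbas
    have hrep : ∀ t, σ (ηt t (r t)) = ∑ i, bas.repr (r t) i • σ (ηt t (bas i)) := by
      intro t
      conv_lhs => rw [← bas.sum_repr (r t)]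
      rw [map_sum, map_sum]
      simp
    refine (IsLittleO.fun_sum fun i _ => ?_).congr (fun t => (hrep t).symm) fun _ => rfl
    have hco : (fun t => bas.repr (r t) i) =o[nhds 0] fun t : ℝ => t ^ 2 := by
      have hφ := ((LinearMap.toContinuousLinearMap (bas.coord i)).isBigO_comp r
        (nhds 0)).trans_isLittleO hrh
      simpa [Module.Basis.coord_apply] using hφ
    have hb1 : (fun t => σ (ηt t (bas i))) =O[nhds 0] fun _ : ℝ => (1:ℝ) :=
      (hFO (bas i)).trans ht1
    simpa using hco.smul_isBigO hb1
  -- main per-pair computation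
  have key : ∀ u v : h,
      η ⟨b u v, hsub u u.2 v v.2⟩
          = h.mkQ (b (σ (η u)) v + b u (σ (η v))) ∧
      ρ ⟨b u v, hsub u u.2 v v.2⟩ +
          η ⟨(b (σ (η u)) v + b u (σ (η v))) -
              σ (h.mkQ (b (σ (η u)) v + b u (σ (η v)))), hproj _⟩
          = h.mkQ ((b (σ (ρ u)) v + b u (σ (ρ v))) + b (σ (η u)) (σ (η v))) := by
    intro u v
    choose z hz using fun t => hgraph t u v
    set su := σ (η u) with hsu
    set sv := σ (η v) with hsv
    set pu := σ (ρ u) with hpu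
    set pv := σ (ρ v) with hpv
    set G : ℝ → V := fun t => b ((u : V) + σ (ηt t u)) ((v : V) + σ (ηt t v)) with hG
    set g1 : V := b su (v : V) + b (u : V) sv with hg1
    set g2 : V := (b pu (v : V) + b (u : V) pv) + b su sv with hg2
    set Z0 : h := ⟨b (u : V) (v : V), hsub u u.2 v v.2⟩ with hZ0
    set Z1 : h := ⟨g1 - σ (h.mkQ g1), hproj g1⟩ with hZ1
    set Z2 : h := ⟨g2 - σ (h.mkQ g2), hproj g2⟩ with hZ2
    set D : ℝ → V := fun t => G t - ((Z0 : V) + t • g1 + t ^ 2 • g2) with hD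
    have hmkG : ∀ t, h.mkQ (G t) = ηt t (z t) := by
      intro t
      have h1 : G t = (z t : V) + σ (ηt t (z t)) := hz t
      rw [h1, map_add, hmk0, hσ, zero_add]
    have hkeyt : ∀ t, σ (ηt t (z t)) = P (G t) := fun t => by rw [hP, hmkG]
    have hzV : ∀ t, ((z t : V)) = G t - P (G t) := by
      intro t
      rw [← hkeyt t]
      have h1 : G t = (z t : V) + σ (ηt t (z t)) := hz t
      rw [h1]; abel
    -- expansion of G
    have hDo : D =o[nhds 0] fun t : ℝ => t ^ 2 := by
      have hterm1 : (fun t => b ((u : V)) (σ (ηt t v) - t • sv - t ^ 2 • pv))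
          =o[nhds 0] fun t : ℝ => t ^ 2 := by
        have := hbOo (isBigO_const_const ((u : V)) (one_ne_zero (α := ℝ)) (nhds 0)) (herr v)
        exact this.congr (fun _ => rfl) fun t => one_mul _
      have hterm2 : (fun t => b (σ (ηt t u) - t • su - t ^ 2 • pu) ((v : V)))
          =o[nhds 0] fun t : ℝ => t ^ 2 := by
        have := hboO (herr u) (isBigO_const_const ((v : V)) (one_ne_zero (α := ℝ)) (nhds 0))
        exact this.congr (fun _ => rfl) fun t => mul_one _
      have hterm3 : (fun t => b (σ (ηt t u)) (σ (ηt t v) - t • sv))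
          =o[nhds 0] fun t : ℝ => t ^ 2 :=
        (hbOO (hFO u) (hrem v)).trans_isLittleO ho32
      have hterm4 : (fun t => t • b (σ (ηt t u) - t • su) sv)
          =o[nhds 0] fun t : ℝ => t ^ 2 := by
        have h1 : (fun t => b (σ (ηt t u) - t • su) sv) =O[nhds 0] fun t : ℝ => t ^ 2 := by
          have := hbOO (hrem u) (isBigO_const_const sv (one_ne_zero (α := ℝ)) (nhds 0))
          exact this.congr (fun _ => rfl) fun t => mul_one _
        have h2 := (isBigO_refl (fun t : ℝ => t) (nhds 0)).smul h1
        exact (h2.congr (fun _ => rfl) fun t => rfl).trans_isLittleO ho32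
      have hsum := (hterm1.add hterm2).add (hterm3.add hterm4)
      refine hsum.congr (fun t => ?_) fun _ => rfl
      show _ = D t
      rw [hD, hG, hg1, hg2, hZ0]
      simp only [map_add, map_sub, map_smul, LinearMap.add_apply, LinearMap.sub_apply,
        LinearMap.smul_apply]
      module
    -- remainder in h
    set R : ℝ → h := fun t => z t - Z0 - t • Z1 - t ^ 2 • Z2 with hR
    have hRV : ∀ t, ((R t : V)) = D t - P (D t) := by
      intro t
      have hcoe : ((R t : V)) = (z t : V) - (Z0 : V) - t • (Z1 : V) - t ^ 2 • (Z2 : V) := by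
        rw [hR]
        push_cast
        ring_nf
      have hz1 : ((Z1 : V)) = g1 - P g1 := by rw [hZ1, hP]
      have hz2 : ((Z2 : V)) = g2 - P g2 := by rw [hZ2, hP]
      have hDt : D t = G t - ((Z0 : V) + t • g1 + t ^ 2 • g2) := rfl
      rw [hcoe, hzV t, hz1, hz2, hDt]
      simp only [map_sub, map_add, map_smul, hPmem Z0]
      module
    have hRo : (fun t => ((R t : V))) =o[nhds 0] fun t : ℝ => t ^ 2 :=
      (hDo.sub ((P.isBigO_comp D (nhds 0)).trans_isLittleO hDo)).congr
        (fun t => (hRV t).symm) fun _ => rfl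
    -- LHS expansion
    have hηR : ∀ t, σ (ηt t (R t)) = σ (ηt t (z t)) - σ (ηt t Z0)
        - t • σ (ηt t Z1) - t ^ 2 • σ (ηt t Z2) := by
      intro t
      rw [hR]
      simp only [map_sub, map_smul]
    have hLHS : (fun t => σ (ηt t (z t)) - (t • σ (η Z0) + t ^ 2 • (σ (ρ Z0) + σ (η Z1))))
        =o[nhds 0] fun t : ℝ => t ^ 2 := by
      have e1 := herr Z0
      have e2 : (fun t => t • (σ (ηt t Z1) - t • σ (η Z1))) =o[nhds 0] fun t : ℝ => t ^ 2 := by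
        have := (isBigO_refl (fun t : ℝ => t) (nhds 0)).smul (hrem Z1)
        exact (this.congr (fun _ => rfl) fun t => rfl).trans_isLittleO ho32
      have e3 : (fun t => t ^ 2 • σ (ηt t Z2)) =o[nhds 0] fun t : ℝ => t ^ 2 := by
        have := (isBigO_refl (fun t : ℝ => t ^ 2) (nhds 0)).smul (hFO Z2)
        exact (this.congr (fun _ => rfl) fun t => rfl).trans_isLittleO ho32'
      have e4 := hsmall R hRo
      have hsum := (e1.add e2).add (e3.add e4)
      refine hsum.congr (fun t => ?_) fun _ => rfl
      rw [hηR t]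
      module
    -- RHS expansion
    have hRHS : (fun t => P (G t) - (t • P g1 + t ^ 2 • P g2)) =o[nhds 0] fun t : ℝ => t ^ 2 := by
      refine ((P.isBigO_comp D (nhds 0)).trans_isLittleO hDo).congr (fun t => ?_) fun _ => rfl
      rw [hD]
      rw [map_sub, map_add, map_add, map_smul, map_smul, hPmem Z0]
      module
    -- combine and extract coefficients
    have hcomb : (fun t => t • (P g1 - σ (η Z0)) +
        t ^ 2 • (P g2 - (σ (ρ Z0) + σ (η Z1)))) =o[nhds 0] fun t : ℝ => t ^ 2 := by
      refine (hLHS.sub hRHS).congr (fun t => ?_) fun _ => rfl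
      rw [hkeyt t]
      module
    obtain ⟨k1, k2⟩ := kur_coeff_extract _ _ hcomb
    have key1 : η Z0 = h.mkQ g1 := by
      have h1 : P g1 = σ (η Z0) := sub_eq_zero.mp k1
      have h2 := congrArg h.mkQ h1
      rw [hPP, hσ] at h2
      exact h2.symm
    have key2 : ρ Z0 + η Z1 = h.mkQ g2 := by
      have h1 : P g2 = σ (ρ Z0 + η Z1) := by
        rw [map_add σ]
        exact sub_eq_zero.mp k2
      have h2 := congrArg h.mkQ h1
      rw [hPP, hσ] at h2
      exact h2.symm
    exact ⟨key1, key2⟩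
  constructor
  · intro u v
    have k := (key u v).1
    rw [k, map_add, hskew (σ (η u)) (v : V), map_neg]
    abel
  · intro u v
    have k2 := (key u v).2
    have e : η ⟨(b (σ (η u)) v + b u (σ (η v))) -
          σ (h.mkQ (b (σ (η u)) v + b u (σ (η v)))), hproj _⟩
        = h.mkQ ((b (σ (ρ u)) v + b u (σ (ρ v))) + b (σ (η u)) (σ (η v)))
          - ρ ⟨b u v, hsub u u.2 v v.2⟩ :=
      eq_sub_of_add_eq' k2
    rw [e, map_add, map_add, hskew (σ (ρ u)) (v : V), map_neg]
    abel
end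

section
/- Let a Lie group G act smoothly on a vector bundle E → M, preserving the zero section, and let σ : M → E be an equivariant section. If x ∈ M is a zero of σ such that the sequence 𝔤 → T_xM → E_x (given by the infinitesimal action dμ_x and the vertical derivative d^vert σ) is exact, then there is an open neighborhood U of x and a smooth map h : U → G such that h(y)·x = y for every y ∈ U with σ(y) = 0. In particular, the G-orbit of x contains a neighborhood of x in σ⁻¹(0). -/
open Manifold
open scoped Topology

set_option maxHeartbeats 1000000000

/-- Openness of orbits: Let a Lie group `G` act smoothly on a vector
bundle over `M` (here presented in a trivialization `M × V`, with a smooth base action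
`act` and a smooth fiberwise-linear action `actV`; linearity of the fiber action means
exactly that the zero section is preserved), and let `σ : M → V` be an equivariant
section.  If `x` is a zero of `σ` at which the sequence `𝔤 → T_xM → E_x`
(infinitesimal action followed by the vertical derivative of `σ`) is exact, then there
is an open neighbourhood `U` of `x` and a smooth map `h : U → G` with `h(y)·x = y` for
every zero `y ∈ U` of `σ`; in particular the `G`-orbit of `x` contains a neighbourhood
of `x` in `σ⁻¹(0)`. -/
theorem orbit_open_in_zero_set_of_equivariant_section
    {EG : Type*} [NormedAddCommGroup EG] [NormedSpace ℝ EG]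
    {HG : Type*} [TopologicalSpace HG] {I : ModelWithCorners ℝ EG HG}
    {G : Type*} [TopologicalSpace G] [ChartedSpace HG G] [Group G] [LieGroup I (⊤ : ℕ∞) G]
    {M : Type*} [NormedAddCommGroup M] [NormedSpace ℝ M] [FiniteDimensional ℝ M]
    {V : Type*} [NormedAddCommGroup V] [NormedSpace ℝ V] [FiniteDimensional ℝ V]
    (act : G → M → M) (actV : G → M → (V ≃ₗ[ℝ] V))
    (hact_smooth : ContMDiff (I.prod 𝓘(ℝ, M × V)) 𝓘(ℝ, M × V) (⊤ : ℕ∞)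
      fun p : G × (M × V) => (act p.1 p.2.1, actV p.1 p.2.1 p.2.2))
    (hact_one : ∀ x, act 1 x = x)
    (hact_mul : ∀ g g' x, act (g * g') x = act g (act g' x))
    (hactV_one : ∀ x v, actV 1 x v = v)
    (hactV_mul : ∀ g g' x v, actV (g * g') x v = actV g (act g' x) (actV g' x v))
    (σ : M → V) (hσ : ContDiff ℝ (⊤ : ℕ∞) σ)
    (hequiv : ∀ g x, σ (act g x) = actV g x (σ x))
    (x : M) (hx : σ x = 0)
    (hexact : Set.range (mfderiv I 𝓘(ℝ, M) (fun g => act g x) 1) =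
      {v : M | fderiv ℝ σ x v = 0}) :
    ∃ U : Set M, IsOpen U ∧ x ∈ U ∧ ∃ h : M → G,
      ContMDiffOn 𝓘(ℝ, M) I (⊤ : ℕ∞) h U ∧ ∀ y ∈ U, σ y = 0 → act (h y) x = y := by
  classical
  have hone : (1 : WithTop ℕ∞) ≤ ((⊤ : ℕ∞) : WithTop ℕ∞) := by
    exact_mod_cast (le_top : (1 : ℕ∞) ≤ ⊤)
  have hσ' : ContDiff ℝ ((⊤ : ℕ∞) : WithTop ℕ∞) σ := hσ.of_le (by simp)
  have hσdiff : Differentiable ℝ σ := hσ'.differentiable (by simp)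
  -- the orbit map is smooth
  have hF : ContMDiff I 𝓘(ℝ, M) (⊤ : ℕ∞) (fun g : G => act g x) := by
    have h1 : ContMDiff I (I.prod 𝓘(ℝ, M × V)) (⊤ : ℕ∞)
        (fun g : G => (g, ((x, (0 : V)) : M × V))) :=
      contMDiff_id.prodMk contMDiff_const
    have h2 := hact_smooth.comp h1
    exact contDiff_fst.comp_contMDiff h2
  -- orbit points are zeros
  have horb : ∀ g : G, σ (act g x) = 0 := by
    intro g; rw [hequiv, hx, map_zero]
  -- chart setup around 1 ∈ G
  have h1src : (1 : G) ∈ (extChartAt I (1 : G)).source := mem_extChartAt_source 1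
  have ha₀t : extChartAt I (1 : G) 1 ∈ (extChartAt I (1 : G)).target :=
    (extChartAt I (1 : G)).map_source h1src
  have htarget : (extChartAt I (1 : G)).target
      = I.symm ⁻¹' (chartAt HG (1 : G)).target ∩ Set.range I := extChartAt_target (I := I) 1
  have hO₁open : IsOpen (I.symm ⁻¹' (chartAt HG (1 : G)).target) :=
    (chartAt HG (1 : G)).open_target.preimage I.continuous_symm
  have ha₀O₁ : extChartAt I (1 : G) 1 ∈ I.symm ⁻¹' (chartAt HG (1 : G)).target :=
    (htarget ▸ ha₀t).1
  obtain ⟨ε₀, hε₀pos, hball₀⟩ := Metric.isOpen_iff.mp hO₁open _ ha₀O₁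
  have ha₀cl : extChartAt I (1 : G) 1 ∈ closure (interior (Set.range I)) :=
    I.range_subset_closure_interior (htarget ▸ ha₀t).2
  obtain ⟨b, hbint, hbd⟩ : ∃ b, b ∈ interior (Set.range I)
      ∧ dist (extChartAt I (1 : G) 1) b < ε₀ / 2 :=
    Metric.mem_closure_iff.mp ha₀cl (ε₀ / 2) (by positivity)
  obtain ⟨ε₁, hε₁pos, hball₁⟩ := Metric.isOpen_iff.mp isOpen_interior b hbint
  set ε' : ℝ := min ε₁ (ε₀ / 2) with hε'def
  have hε'pos : 0 < ε' := lt_min hε₁pos (by positivity)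
  have hballφ : Metric.ball b ε' ⊆ (extChartAt I (1 : G)).target := by
    intro a ha
    rw [htarget]
    constructor
    · apply hball₀
      have h1 : dist a b < ε₀ / 2 := lt_of_lt_of_le (Metric.mem_ball.mp ha) (min_le_right _ _)
      have := dist_triangle a b (extChartAt I (1 : G) 1)
      rw [Metric.mem_ball]
      rw [dist_comm] at hbd
      linarith
    · exact interior_subset (hball₁ (Metric.mem_ball.mpr
        (lt_of_lt_of_le (Metric.mem_ball.mp ha) (min_le_left _ _))))
  have hbt : b ∈ (extChartAt I (1 : G)).target := hballφ (Metric.mem_ball_self hε'pos)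
  set g₀ : G := (extChartAt I (1 : G)).symm b with hg₀def
  have hg₀src : g₀ ∈ (extChartAt I (1 : G)).source := (extChartAt I (1 : G)).map_target hbt
  have hφg₀ : extChartAt I (1 : G) g₀ = b := (extChartAt I (1 : G)).right_inv hbt
  -- the translated local orbit map
  set fh : EG → M := fun a => act (g₀⁻¹ * (extChartAt I (1 : G)).symm a) x with hfhdef
  have hfhb : fh b = x := by
    simp only [hfhdef, ← hg₀def, inv_mul_cancel, hact_one]
  have horbfh : ∀ a, σ (fh a) = 0 := fun a => horb _
  have hfhsm : ContDiffOn ℝ ((⊤ : ℕ∞) : WithTop ℕ∞) fh (Metric.ball b ε') := by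
    have h1 : ContMDiffOn 𝓘(ℝ, EG) I (⊤ : ℕ∞) (extChartAt I (1 : G)).symm (Metric.ball b ε') :=
      (contMDiffOn_extChartAt_symm (1 : G)).mono hballφ
    have h2 : ContMDiff I I (⊤ : ℕ∞) (fun g : G => g₀⁻¹ * g) := contMDiff_mul_left
    have h3 : ContMDiffOn 𝓘(ℝ, EG) 𝓘(ℝ, M) (⊤ : ℕ∞) fh (Metric.ball b ε') :=
      (hF.comp h2).comp_contMDiffOn h1
    exact h3.contDiffOn
  have hballnhds : Metric.ball b ε' ∈ 𝓝 b := Metric.ball_mem_nhds b hε'pos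
  have hfhat : ContDiffAt ℝ ((⊤ : ℕ∞) : WithTop ℕ∞) fh b := hfhsm.contDiffAt hballnhds
  set Ahat : EG →L[ℝ] M := fderiv ℝ fh b with hAhatdef
  -- range of Ahat ⊆ ker dσ_x
  have hDA : ∀ v : EG, fderiv ℝ σ x (Ahat v) = 0 := by
    have hzero : σ ∘ fh = fun _ => (0 : V) := funext horbfh
    have h1 : fderiv ℝ (σ ∘ fh) b = 0 := by rw [hzero]; exact fderiv_const_apply 0
    have h2 : fderiv ℝ (σ ∘ fh) b = (fderiv ℝ σ (fh b)).comp Ahat :=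
      fderiv_comp b (hσdiff _) (hfhat.differentiableAt (by simp))
    intro v
    have h3 := congrArg (fun (T : EG →L[ℝ] V) => T v) (h1.symm.trans h2)
    simpa [hfhb] using h3.symm
  -- ker dσ_x ⊆ range of Ahat, via the chain rule through the chart
  have hτ : ContMDiffAt I 𝓘(ℝ, EG) (⊤ : ℕ∞) (fun g : G => extChartAt I (1 : G) (g₀ * g)) 1 := by
    have h1 : ContMDiffAt I I (⊤ : ℕ∞) (fun g : G => g₀ * g) 1 := contMDiff_mul_left.contMDiffAt
    have h2 : ContMDiffAt I 𝓘(ℝ, EG) (⊤ : ℕ∞) (extChartAt I (1 : G)) (g₀ * 1) := by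
      rw [mul_one]
      exact contMDiffAt_extChartAt' (by rw [← extChartAt_source I]; exact hg₀src)
    exact h2.comp 1 h1
  have hcongr : (fun g : G => act g x)
      =ᶠ[𝓝 (1 : G)] (fh ∘ fun g : G => extChartAt I (1 : G) (g₀ * g)) := by
    have hmem : {g : G | g₀ * g ∈ (extChartAt I (1 : G)).source} ∈ 𝓝 (1 : G) := by
      have hc : Continuous (fun g : G => g₀ * g) := (contMDiff_mul_left (I := I) (a := g₀) (n := (⊤ : ℕ∞))).continuous
      have : g₀ * 1 ∈ (extChartAt I (1 : G)).source := by rwa [mul_one]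
      exact hc.continuousAt.preimage_mem_nhds ((isOpen_extChartAt_source _).mem_nhds this)
    filter_upwards [hmem] with g hg
    show act g x = fh (extChartAt I (1 : G) (g₀ * g))
    rw [hfhdef]
    simp only
    rw [(extChartAt I (1 : G)).left_inv hg, inv_mul_cancel_left]
  have hKsub : ∀ v : M, fderiv ℝ σ x v = 0 → v ∈ Set.range Ahat := by
    have hA_eq : mfderiv I 𝓘(ℝ, M) (fun g : G => act g x) 1
        = Ahat.comp (mfderiv I 𝓘(ℝ, EG) (fun g : G => extChartAt I (1 : G) (g₀ * g)) 1) := by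
      rw [hcongr.mfderiv_eq]
      have hfh' : MDifferentiableAt 𝓘(ℝ, EG) 𝓘(ℝ, M) fh
          ((fun g : G => extChartAt I (1 : G) (g₀ * g)) 1) := by
        have : (fun g : G => extChartAt I (1 : G) (g₀ * g)) 1 = b := by
          show extChartAt I (1 : G) (g₀ * 1) = b
          rw [mul_one, hφg₀]
        rw [this]
        exact (contMDiffAt_iff_contDiffAt.mpr hfhat).mdifferentiableAt (by simp)
      have hτ' : MDifferentiableAt I 𝓘(ℝ, EG)
          (fun g : G => extChartAt I (1 : G) (g₀ * g)) 1 := hτ.mdifferentiableAt (by simp)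
      rw [mfderiv_comp 1 hfh' hτ']
      congr 1
      show mfderiv 𝓘(ℝ, EG) 𝓘(ℝ, M) fh (extChartAt I (1 : G) (g₀ * 1)) = Ahat
      rw [mul_one, hφg₀, mfderiv_eq_fderiv]
    intro v hv
    have hv' : v ∈ Set.range (mfderiv I 𝓘(ℝ, M) (fun g : G => act g x) 1) := by
      rw [hexact]; exact hv
    obtain ⟨ξ, hξ⟩ := hv'
    rw [hA_eq] at hξ
    exact ⟨_, hξ⟩
  -- linear algebra: K = ker dσ_x, complement C, basis of K, preimages under Ahat
  set K : Submodule ℝ M := LinearMap.ker (fderiv ℝ σ x : M →ₗ[ℝ] V) with hKdef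
  obtain ⟨C, hKC⟩ := Submodule.exists_isCompl K
  obtain ⟨r, ⟨bK⟩⟩ : ∃ n : ℕ, Nonempty (Module.Basis (Fin n) ℝ ↥K) :=
    ⟨Module.finrank ℝ ↥K, ⟨Module.finBasis ℝ ↥K⟩⟩
  have hbKmem : ∀ i, ((bK i : M)) ∈ K := fun i => (bK i).2
  have hpre : ∀ i : Fin r, ∃ ξ : EG, Ahat ξ = (bK i : M) := by
    intro i
    exact hKsub _ (LinearMap.mem_ker.mp (hbKmem i))
  choose ξv hξv using hpre
  set ιl : (Fin r → ℝ) →ₗ[ℝ] EG := (Pi.basisFun ℝ (Fin r)).constr ℝ ξv with hιldef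
  set ι : (Fin r → ℝ) →L[ℝ] EG := LinearMap.toContinuousLinearMap ιl with hιdef
  have hι_apply : ∀ u : Fin r → ℝ, ι u = ∑ i, u i • ξv i := by
    intro u
    show ιl u = _
    rw [hιldef, Module.Basis.constr_apply_fintype]
    simp [Pi.basisFun_equivFun]
  have hAι : ∀ u : Fin r → ℝ, Ahat (ι u) = ∑ i, u i • ((bK i : M)) := by
    intro u
    rw [hι_apply, map_sum]
    simp [hξv]
  have hAιmem : ∀ u : Fin r → ℝ, Ahat (ι u) ∈ K := by
    intro u
    rw [hAι]
    exact Submodule.sum_mem K fun i _ => Submodule.smul_mem K _ (hbKmem i)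
  -- the left inverse E of dσ_x on C
  set DCl : ↥C →ₗ[ℝ] V := (fderiv ℝ σ x : M →ₗ[ℝ] V) ∘ₗ C.subtype with hDCldef
  have hDCinj : Function.Injective DCl := by
    intro c c' hcc
    have h1 : ((c : M) - (c' : M)) ∈ K := by
      rw [hKdef, LinearMap.mem_ker]
      have : fderiv ℝ σ x (c : M) = fderiv ℝ σ x (c' : M) := hcc
      rw [map_sub, ContinuousLinearMap.coe_coe, this, sub_self]
    have h2 : ((c : M) - (c' : M)) ∈ C := Submodule.sub_mem C c.2 c'.2
    have h3 : ((c : M) - (c' : M)) = 0 :=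
      Submodule.disjoint_def.mp hKC.disjoint _ h1 h2
    exact Subtype.ext (sub_eq_zero.mp h3)
  set eqv : ↥C ≃ₗ[ℝ] ↥(LinearMap.range DCl) := LinearEquiv.ofInjective DCl hDCinj with heqvdef
  obtain ⟨W, hW⟩ := Submodule.exists_isCompl (LinearMap.range DCl)
  set projW : V →ₗ[ℝ] ↥(LinearMap.range DCl) :=
    (LinearMap.range DCl).linearProjOfIsCompl W hW with hprojWdef
  set E : V →L[ℝ] ↥C := LinearMap.toContinuousLinearMap (eqv.symm.toLinearMap ∘ₗ projW)
    with hEdef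
  have hED : ∀ c : ↥C, E (fderiv ℝ σ x (c : M)) = c := by
    intro c
    show eqv.symm (projW (fderiv ℝ σ x (c : M))) = c
    have h1 : fderiv ℝ σ x (c : M) = DCl c := rfl
    have h2 : projW (DCl c) = ⟨DCl c, LinearMap.mem_range_self _ c⟩ := by
      rw [hprojWdef]
      exact Submodule.linearProjOfIsCompl_apply_left hW ⟨DCl c, LinearMap.mem_range_self _ c⟩
    rw [h1, h2]
    have h3 : eqv c = ⟨DCl c, LinearMap.mem_range_self _ c⟩ := by
      apply Subtype.ext
      simp [heqvdef]
    rw [← h3, LinearEquiv.symm_apply_apply]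
  -- the IFT map Ψ
  set Ψ : (Fin r → ℝ) × ↥C → M := fun z => fh (b + ι z.1) + ((z.2 : M)) with hΨdef
  set Ω : Set ((Fin r → ℝ) × ↥C) := {z | b + ι z.1 ∈ Metric.ball b ε'} with hΩdef
  have hΩopen : IsOpen Ω := by
    have hc : Continuous (fun z : (Fin r → ℝ) × ↥C => b + ι z.1) :=
      continuous_const.add (ι.continuous.comp continuous_fst)
    exact Metric.isOpen_ball.preimage hc
  have hΩ0 : (0 : (Fin r → ℝ) × ↥C) ∈ Ω := by
    simp [hΩdef, hε'pos]
  have hqmaps : ∀ z ∈ Ω, b + ι z.1 ∈ Metric.ball b ε' := fun z hz => hz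
  have hΨsm : ContDiffOn ℝ ((⊤ : ℕ∞) : WithTop ℕ∞) Ψ Ω := by
    have h1 : ContDiff ℝ ((⊤ : ℕ∞) : WithTop ℕ∞)
        (fun z : (Fin r → ℝ) × ↥C => b + ι z.1) :=
      contDiff_const.add (ι.contDiff.comp contDiff_fst)
    have h2 : ContDiffOn ℝ ((⊤ : ℕ∞) : WithTop ℕ∞)
        (fun z : (Fin r → ℝ) × ↥C => fh (b + ι z.1)) Ω :=
      hfhsm.comp h1.contDiffOn hqmaps
    exact h2.add ((C.subtypeL.contDiff.comp contDiff_snd).contDiffOn)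
  have hΨ0 : Ψ 0 = x := by
    simp [hΨdef, hfhb]
  -- strict derivative of Ψ at 0
  set fstL : ((Fin r → ℝ) × ↥C) →L[ℝ] (Fin r → ℝ) := ContinuousLinearMap.fst ℝ _ _
    with hfstLdef
  set sndL : ((Fin r → ℝ) × ↥C) →L[ℝ] ↥C := ContinuousLinearMap.snd ℝ _ _ with hsndLdef
  set N₀ : ((Fin r → ℝ) × ↥C) →L[ℝ] M :=
    (Ahat.comp (ι.comp fstL)) + (C.subtypeL.comp sndL) with hN₀def
  have hq0 : b + ι ((0 : (Fin r → ℝ) × ↥C)).1 = b := by simp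
  have hN₀strict : HasStrictFDerivAt Ψ N₀ 0 := by
    have hfb' : HasStrictFDerivAt fh Ahat b := hfhat.hasStrictFDerivAt (by simp)
    have hfb'' : HasStrictFDerivAt fh Ahat (b + ι ((0 : (Fin r → ℝ) × ↥C)).1) := by
      rwa [hq0]
    have hq : HasStrictFDerivAt (fun z : (Fin r → ℝ) × ↥C => b + ι z.1) (ι.comp fstL) 0 :=
      ((ι.comp fstL).hasStrictFDerivAt).const_add b
    have hcomp := hfb''.comp (0 : (Fin r → ℝ) × ↥C) hq
    have hsnd : HasStrictFDerivAt (fun z : (Fin r → ℝ) × ↥C => ((z.2 : M)))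
        (C.subtypeL.comp sndL) 0 := (C.subtypeL.comp sndL).hasStrictFDerivAt
    have := hcomp.add hsnd
    exact this
  -- N₀ is a continuous linear equivalence
  have hN₀inj : Function.Injective N₀ := by
    intro z z' hzz
    have hz0 : N₀ (z - z') = 0 := by rw [map_sub, hzz, sub_self]
    have h1 : Ahat (ι (z - z').1) + (((z - z').2 : ↥C) : M) = 0 := hz0
    have hmemK : Ahat (ι (z - z').1) ∈ K := hAιmem _
    have hmemC : (((z - z').2 : ↥C) : M) ∈ C := ((z - z').2).2
    have hc0 : (((z - z').2 : ↥C) : M) = 0 := by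
      have : (((z - z').2 : ↥C) : M) = -(Ahat (ι (z - z').1)) := by
        rw [eq_neg_iff_add_eq_zero, add_comm]; exact h1
      have hmemK' : (((z - z').2 : ↥C) : M) ∈ K := by
        rw [this]; exact Submodule.neg_mem K hmemK
      exact Submodule.disjoint_def.mp hKC.disjoint _ hmemK' hmemC
    have hA0 : Ahat (ι (z - z').1) = 0 := by
      rw [hc0, add_zero] at h1; exact h1
    have hu0 : (z - z').1 = 0 := by
      rw [hAι] at hA0
      have hsum : (∑ i, (z - z').1 i • bK i : ↥K) = 0 := by
        apply Subtype.ext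
        push_cast
        simpa using hA0
      have hli := Fintype.linearIndependent_iff.mp bK.linearIndependent
      exact funext (hli _ hsum)
    have hc0' : (z - z').2 = 0 := Subtype.ext hc0
    have : z - z' = 0 := Prod.ext hu0 hc0'
    exact sub_eq_zero.mp this
  have hN₀surj : Function.Surjective N₀ := by
    intro m
    have hm : m ∈ K ⊔ C := by rw [hKC.sup_eq_top]; trivial
    obtain ⟨k, hk, c, hc, hkc⟩ := Submodule.mem_sup.mp hm
    set u : Fin r → ℝ := bK.equivFun ⟨k, hk⟩ with hudef
    refine ⟨(u, ⟨c, hc⟩), ?_⟩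
    show Ahat (ι u) + c = m
    have h1 : Ahat (ι u) = k := by
      rw [hAι]
      have h2 : (∑ i, u i • bK i : ↥K) = ⟨k, hk⟩ := bK.sum_equivFun ⟨k, hk⟩
      have h3 := congrArg (fun (y : ↥K) => (y : M)) h2
      push_cast at h3
      simpa using h3
    rw [h1, hkc]
  set Nl : ((Fin r → ℝ) × ↥C) ≃ₗ[ℝ] M :=
    LinearEquiv.ofBijective (N₀ : ((Fin r → ℝ) × ↥C) →ₗ[ℝ] M) ⟨hN₀inj, hN₀surj⟩ with hNldef
  set N : ((Fin r → ℝ) × ↥C) ≃L[ℝ] M := Nl.toContinuousLinearEquiv with hNdef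
  have hNcoe : (N : ((Fin r → ℝ) × ↥C) →L[ℝ] M) = N₀ := by
    apply ContinuousLinearMap.ext
    intro z
    rfl
  have hNstrict : HasStrictFDerivAt Ψ (N : ((Fin r → ℝ) × ↥C) →L[ℝ] M) 0 := by
    rw [hNcoe]; exact hN₀strict
  -- the projected section map Ξ and uniqueness of zeros in the C-direction
  set Θ : (M →L[ℝ] V) →L[ℝ] (↥C →L[ℝ] ↥C) :=
    (ContinuousLinearMap.compL ℝ ↥C V ↥C E).comp
      ((ContinuousLinearMap.compL ℝ ↥C M V).flip C.subtypeL) with hΘdef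
  set Ξ : ((Fin r → ℝ) × ↥C) → (↥C →L[ℝ] ↥C) := fun z => Θ (fderiv ℝ σ (Ψ z)) with hΞdef
  have hΞapply : ∀ z c, Ξ z c = E (fderiv ℝ σ (Ψ z) (c : M)) := fun z c => rfl
  set IdC : ↥C →L[ℝ] ↥C := ContinuousLinearMap.id ℝ ↥C with hIdCdef
  have hΞ0 : Ξ 0 = IdC := by
    apply ContinuousLinearMap.ext
    intro c
    rw [hΞapply, hΨ0]
    exact hED c
  have hfderivσcont : Continuous (fun y : M => fderiv ℝ σ y) := by
    have := (hσ'.fderiv_right (m := 0) (by simpa using hone)).continuous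
    exact this
  have hΞcont : ContinuousOn Ξ Ω := by
    have h1 : ContinuousOn (fun z => fderiv ℝ σ (Ψ z)) Ω :=
      hfderivσcont.comp_continuousOn hΨsm.continuousOn
    exact Θ.continuous.comp_continuousOn h1
  have hO₅open : IsOpen (Ω ∩ Ξ ⁻¹' Metric.ball IdC (1/2)) :=
    hΞcont.isOpen_inter_preimage hΩopen Metric.isOpen_ball
  have h0O₅ : (0 : (Fin r → ℝ) × ↥C) ∈ Ω ∩ Ξ ⁻¹' Metric.ball IdC (1/2) :=
    ⟨hΩ0, by rw [Set.mem_preimage, hΞ0]; exact Metric.mem_ball_self (by norm_num)⟩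
  obtain ⟨ε₂, hε₂pos, hballO₅⟩ := Metric.isOpen_iff.mp hO₅open 0 h0O₅
  have hpairball : ∀ (u : Fin r → ℝ) (c : ↥C), u ∈ Metric.ball (0 : Fin r → ℝ) ε₂ →
      c ∈ Metric.ball (0 : ↥C) ε₂ →
      ((u, c) : (Fin r → ℝ) × ↥C) ∈ Metric.ball (0 : (Fin r → ℝ) × ↥C) ε₂ := by
    intro u c hu hc
    rw [Metric.mem_ball] at hu hc ⊢
    rw [Prod.dist_eq]
    exact max_lt hu hc
  have hcapture : ∀ z : (Fin r → ℝ) × ↥C, z ∈ Metric.ball (0 : (Fin r → ℝ) × ↥C) ε₂ →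
      σ (Ψ z) = 0 → z.2 = 0 := by
    intro z hz hσz
    have hz1 : z.1 ∈ Metric.ball (0 : Fin r → ℝ) ε₂ := by
      rw [Metric.mem_ball] at hz ⊢
      rw [Prod.dist_eq] at hz
      exact lt_of_le_of_lt (le_max_left _ _) hz
    have hz2 : z.2 ∈ Metric.ball (0 : ↥C) ε₂ := by
      rw [Metric.mem_ball] at hz ⊢
      rw [Prod.dist_eq] at hz
      exact lt_of_le_of_lt (le_max_right _ _) hz
    set a1 : M := fh (b + ι z.1) with ha1def
    set ρ : ↥C → ↥C := fun c => E (σ (a1 + (c : M))) with hρdef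
    have hΨz1 : ∀ c : ↥C, Ψ (z.1, c) = a1 + (c : M) := fun c => rfl
    have hρfd : ∀ c' ∈ Metric.ball (0 : ↥C) ε₂,
        HasFDerivWithinAt ρ (Ξ (z.1, c')) (Metric.ball (0 : ↥C) ε₂) c' := by
      intro c' hc'
      have h1 : HasFDerivAt (fun c : ↥C => a1 + (c : M)) C.subtypeL c' :=
        (C.subtypeL.hasFDerivAt).const_add a1
      have h2 : HasFDerivAt σ (fderiv ℝ σ (a1 + (c' : M))) (a1 + (c' : M)) :=
        (hσdiff _).hasFDerivAt
      have h3 := E.hasFDerivAt.comp c' (h2.comp c' h1)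
      have h4 : Ξ (z.1, c') = E.comp ((fderiv ℝ σ (a1 + (c' : M))).comp C.subtypeL) := by
        apply ContinuousLinearMap.ext
        intro c
        rw [hΞapply, hΨz1]
        rfl
      rw [h4]
      exact h3.hasFDerivWithinAt
    have hmvt := Convex.norm_image_sub_le_of_norm_hasFDerivWithin_le' (φ := IdC) (C := 1/2)
      hρfd
      (fun c' hc' => le_of_lt (mem_ball_iff_norm.mp
        (hballO₅ (hpairball z.1 c' hz1 hc')).2))
      (convex_ball (0 : ↥C) ε₂) hz2 (Metric.mem_ball_self hε₂pos)
    have hρc : ρ z.2 = 0 := by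
      have h5 : a1 + ((z.2 : ↥C) : M) = Ψ z := rfl
      show E (σ (a1 + ((z.2 : ↥C) : M))) = 0
      rw [h5, hσz, map_zero]
    have hρ0 : ρ 0 = 0 := by
      show E (σ (a1 + ((0 : ↥C) : M))) = 0
      simp [ha1def, horbfh]
    rw [hρc, hρ0] at hmvt
    have hn : ‖z.2‖ ≤ 1/2 * ‖z.2‖ := by
      calc ‖z.2‖ = ‖(0 : ↥C) - 0 - IdC (0 - z.2)‖ := by simp [hIdCdef]
        _ ≤ 1/2 * ‖(0 : ↥C) - z.2‖ := hmvt
        _ = 1/2 * ‖z.2‖ := by simp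
    have : ‖z.2‖ = 0 := by nlinarith [norm_nonneg z.2]
    exact norm_eq_zero.mp this
  -- the local inverse of Ψ
  have hΨat : ContDiffAt ℝ ((⊤ : ℕ∞) : WithTop ℕ∞) Ψ 0 := hΨsm.contDiffAt (hΩopen.mem_nhds hΩ0)
  set P : OpenPartialHomeomorph ((Fin r → ℝ) × ↥C) M :=
    hΨat.toOpenPartialHomeomorph Ψ hNstrict.hasFDerivAt (by simp) with hPdef
  have hPcoe : ⇑P = Ψ := hΨat.toOpenPartialHomeomorph_coe hNstrict.hasFDerivAt (by simp)
  have h0src : (0 : (Fin r → ℝ) × ↥C) ∈ P.source :=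
    hΨat.mem_toOpenPartialHomeomorph_source hNstrict.hasFDerivAt (by simp)
  have hxtarget : x ∈ P.target := by
    rw [← hΨ0]
    exact hΨat.image_mem_toOpenPartialHomeomorph_target hNstrict.hasFDerivAt (by simp)
  have hfdΨcont : ContinuousOn (fderiv ℝ Ψ) Ω :=
    hΨsm.continuousOn_fderiv_of_isOpen hΩopen hone
  have hfdΨ0 : fderiv ℝ Ψ 0 = (N : ((Fin r → ℝ) × ↥C) →L[ℝ] M) := hNstrict.hasFDerivAt.fderiv
  set O₆ : Set ((Fin r → ℝ) × ↥C) := Ω ∩ (fderiv ℝ Ψ) ⁻¹'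
    (Set.range ((↑) : (((Fin r → ℝ) × ↥C) ≃L[ℝ] M) → ((Fin r → ℝ) × ↥C) →L[ℝ] M)) with hO₆def
  have hO₆open : IsOpen O₆ :=
    hfdΨcont.isOpen_inter_preimage hΩopen ContinuousLinearEquiv.isOpen
  have h0O₆ : (0 : (Fin r → ℝ) × ↥C) ∈ O₆ := ⟨hΩ0, ⟨N, hfdΨ0.symm⟩⟩
  set Uin : Set ((Fin r → ℝ) × ↥C) := O₆ ∩ Metric.ball 0 ε₂ with hUindef
  have hUinopen : IsOpen Uin := hO₆open.inter Metric.isOpen_ball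
  have h0Uin : (0 : (Fin r → ℝ) × ↥C) ∈ Uin := ⟨h0O₆, Metric.mem_ball_self hε₂pos⟩
  set U : Set M := P.target ∩ P.symm ⁻¹' Uin with hUdef
  have hUopen : IsOpen U := P.isOpen_inter_preimage_symm hUinopen
  have hP0 : P 0 = x := by
    show ⇑P 0 = x
    rw [hPcoe]
    exact hΨ0
  have hPsymmx : P.symm x = 0 := by rw [← hP0]; exact P.left_inv h0src
  have hxU : x ∈ U := ⟨hxtarget, by rw [Set.mem_preimage, hPsymmx]; exact h0Uin⟩
  refine ⟨U, hUopen, hxU,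
    fun y => g₀⁻¹ * (extChartAt I (1 : G)).symm (b + ι (P.symm y).1), ?_, ?_⟩
  · -- smoothness of h on U
    have hPsymmCD : ∀ y ∈ U, ContDiffAt ℝ ((⊤ : ℕ∞) : WithTop ℕ∞) P.symm y := by
      intro y hy
      obtain ⟨hyT, hyin⟩ := hy
      have hzΩ : P.symm y ∈ Ω := hyin.1.1
      obtain ⟨Nz, hNz⟩ := hyin.1.2
      apply P.contDiffAt_symm hyT (f₀' := Nz) ?_ ?_
      · rw [hPcoe, hNz]
        exact ((hΨsm.contDiffAt (hΩopen.mem_nhds hzΩ)).differentiableAt (by simp)).hasFDerivAt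
      · rw [hPcoe]
        exact hΨsm.contDiffAt (hΩopen.mem_nhds hzΩ)
    have hwCD : ContDiffOn ℝ ((⊤ : ℕ∞) : WithTop ℕ∞)
        (fun y : M => b + ι (P.symm y).1) U := by
      intro y hy
      have h1 : ContDiffAt ℝ ((⊤ : ℕ∞) : WithTop ℕ∞)
          (fun w : (Fin r → ℝ) × ↥C => b + ι w.1) (P.symm y) :=
        (contDiff_const.add (ι.contDiff.comp contDiff_fst)).contDiffAt
      exact (h1.comp y (hPsymmCD y hy)).contDiffWithinAt
    have hwM : ContMDiffOn 𝓘(ℝ, M) 𝓘(ℝ, EG) (⊤ : ℕ∞) (fun y : M => b + ι (P.symm y).1) U :=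
      hwCD.contMDiffOn
    have hmaps : Set.MapsTo (fun y : M => b + ι (P.symm y).1) U
        (extChartAt I (1 : G)).target := by
      intro y hy
      exact hballφ hy.2.1.1
    have hsymmM : ContMDiffOn 𝓘(ℝ, EG) I (⊤ : ℕ∞) (extChartAt I (1 : G)).symm
        (extChartAt I (1 : G)).target := contMDiffOn_extChartAt_symm 1
    have hcomp1 : ContMDiffOn 𝓘(ℝ, M) I (⊤ : ℕ∞)
        (fun y : M => (extChartAt I (1 : G)).symm (b + ι (P.symm y).1)) U :=
      hsymmM.comp hwM hmaps
    exact (contMDiff_mul_left (a := g₀⁻¹)).comp_contMDiffOn hcomp1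
  · -- the orbit property
    intro y hyU hσy
    obtain ⟨hyT, hyin⟩ := hyU
    have hy : Ψ (P.symm y) = y := by
      have := P.right_inv hyT
      rwa [hPcoe] at this
    have hz2 : (P.symm y).2 = 0 := hcapture _ hyin.2 (by rw [hy]; exact hσy)
    show act (g₀⁻¹ * (extChartAt I (1 : G)).symm (b + ι (P.symm y).1)) x = y
    have h2 : Ψ (P.symm y) = fh (b + ι (P.symm y).1) + (((P.symm y).2 : ↥C) : M) := rfl
    calc act (g₀⁻¹ * (extChartAt I (1 : G)).symm (b + ι (P.symm y).1)) x
        = fh (b + ι (P.symm y).1) := rfl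
      _ = fh (b + ι (P.symm y).1) + (((P.symm y).2 : ↥C) : M) := by rw [hz2]; simp
      _ = Ψ (P.symm y) := h2.symm
      _ = y := hy
end

section
/- Let ρ : h → g be a Lie algebra homomorphism such that the map H¹(ρ*) : H¹(g,g) → H¹(h,g) induced by restriction along ρ is surjective (cohomology with adjoint, resp. ad∘ρ, coefficients). Then the sequence Z¹(g,g) → Hom(h,g) → Hom(Λ²h,g) is exact, where the first map is ω ↦ ω∘ρ and the second is δ_ρ; consequently ρ is rigid under the action of the full automorphism group Aut(g) on Hom(h,g). -/
open NormedSpace Set Filter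
open NormedSpace Set Filter

section Aux
variable {V : Type*} [NormedAddCommGroup V] [NormedSpace ℝ V] [FiniteDimensional ℝ V]

lemma exp_derivation (bV : V →L[ℝ] V →L[ℝ] V) (ω : V →L[ℝ] V)
    (hω : ∀ x y, ω (bV x y) = bV (ω x) y + bV x (ω y)) (x y : V) :
    exp ω (bV x y) = bV (exp ω x) (exp ω y) := by
  set f : ℝ → V := fun t => exp (t • ω) (bV x y) with hfdef
  set g : ℝ → V := fun t => bV (exp (t • ω) x) (exp (t • ω) y) with hgdef
  have hp : ∀ (z : V) (t : ℝ), HasDerivAt (fun t : ℝ => exp (t • ω) z)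
      (ω (exp (t • ω) z)) t := by
    intro z t
    have h1 := (hasDerivAt_exp_smul_const' (𝕂 := ℝ) ω t).clm_apply (hasDerivAt_const t z)
    simpa [ContinuousLinearMap.mul_apply] using h1
  have hf' : ∀ t, HasDerivAt f (ω (f t)) t := fun t => hp _ t
  have hg' : ∀ t, HasDerivAt g (ω (g t)) t := by
    intro t
    have hx := hp x t
    have hy := hp y t
    have hc : HasDerivAt (fun t : ℝ => bV (exp (t • ω) x))
        (bV (ω (exp (t • ω) x))) t := bV.hasFDerivAt.comp_hasDerivAt t hx
    have := hc.clm_apply hy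
    rw [hgdef]
    convert this using 1
    rw [hω]
  have key : EqOn f g (Icc 0 1) := by
    apply ODE_solution_unique (v := fun _ z => ω z) (K := ‖ω‖₊) (fun _ => ω.lipschitz)
    · exact (continuous_iff_continuousAt.2 fun t => (hf' t).continuousAt).continuousOn
    · exact fun t _ => (hf' t).hasDerivWithinAt
    · exact (continuous_iff_continuousAt.2 fun t => (hg' t).continuousAt).continuousOn
    · exact fun t _ => (hg' t).hasDerivWithinAt
    · simp [hfdef, hgdef]
  have := key (right_mem_Icc.2 zero_le_one)
  simpa [hfdef, hgdef] using this

noncomputable def expAut (ω : V →L[ℝ] V) : V ≃L[ℝ] V :=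
  LinearEquiv.toContinuousLinearEquiv
  { toFun := ⇑(exp ω)
    map_add' := (exp ω).map_add
    map_smul' := (exp ω).map_smul
    invFun := ⇑(exp (-ω))
    left_inv := fun x => by
      have h : exp (-ω) * exp ω = 1 := by
        letI : NormedAlgebra ℚ (V →L[ℝ] V) := NormedAlgebra.restrictScalars ℚ ℝ _; rw [← exp_add_of_commute (Commute.refl ω).neg_left]; simp
      calc exp (-ω) (exp ω x) = (exp (-ω) * exp ω) x := rfl
      _ = x := by rw [h]; rfl
    right_inv := fun x => by
      have h : exp ω * exp (-ω) = 1 := by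
        letI : NormedAlgebra ℚ (V →L[ℝ] V) := NormedAlgebra.restrictScalars ℚ ℝ _; rw [← exp_add_of_commute (Commute.refl ω).neg_right]; simp
      calc exp ω (exp (-ω) x) = (exp ω * exp (-ω)) x := rfl
      _ = x := by rw [h]; rfl }

lemma expAut_coe (ω : V →L[ℝ] V) : ((expAut ω : V ≃L[ℝ] V) : V →L[ℝ] V) = exp ω := by
  ext x
  rfl

end Aux

section Aux2
variable {W V : Type*}
    [NormedAddCommGroup W] [NormedSpace ℝ W] [FiniteDimensional ℝ W]
    [NormedAddCommGroup V] [NormedSpace ℝ V] [FiniteDimensional ℝ V]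

noncomputable def deltaMap (bH : W →L[ℝ] W →L[ℝ] W) (bV : V →L[ℝ] V →L[ℝ] V)
    (ρ : W →L[ℝ] V) : (W →L[ℝ] V) →ₗ[ℝ] (W →L[ℝ] W →L[ℝ] V) where
  toFun ξ := LinearMap.toContinuousLinearMap <|
    { toFun := fun u => LinearMap.toContinuousLinearMap <|
        { toFun := fun v => bV (ρ u) (ξ v) - bV (ρ v) (ξ u) - ξ (bH u v)
          map_add' := by intro v w; simp [map_add]; abel
          map_smul' := by intro r v; simp [map_smul, smul_sub] }
      map_add' := by
        intro u u'; ext v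
        simp [map_add]; abel
      map_smul' := by
        intro r u; ext v
        simp [map_smul, smul_sub] }
  map_add' := by
    intro ξ ξ'; ext u v
    simp [map_add]; abel
  map_smul' := by
    intro r ξ; ext u v
    simp [map_smul, smul_sub]

@[simp] lemma deltaMap_apply (bH : W →L[ℝ] W →L[ℝ] W) (bV : V →L[ℝ] V →L[ℝ] V)
    (ρ : W →L[ℝ] V) (ξ : W →L[ℝ] V) (u v : W) :
    deltaMap bH bV ρ ξ u v = bV (ρ u) (ξ v) - bV (ρ v) (ξ u) - ξ (bH u v) := rfl

noncomputable def precompMap (ρ : W →L[ℝ] V) :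
    (V →L[ℝ] V) →ₗ[ℝ] (W →L[ℝ] V) where
  toFun a := a.comp ρ
  map_add' := by intro a b; ext u; simp
  map_smul' := by intro r a; ext u; simp

@[simp] lemma precompMap_apply (ρ : W →L[ℝ] V) (a : V →L[ℝ] V) (u : W) :
    precompMap ρ a u = a (ρ u) := rfl

def derivations (bV : V →L[ℝ] V →L[ℝ] V) : Submodule ℝ (V →L[ℝ] V) where
  carrier := {a | ∀ x y, a (bV x y) = bV (a x) y + bV x (a y)}
  add_mem' := by intro a b ha hb x y; simp [ha x y, hb x y]; abel
  zero_mem' := by intro x y; simp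
  smul_mem' := by intro r a ha x y; simp [ha x y, smul_add]

lemma mem_derivations (bV : V →L[ℝ] V →L[ℝ] V) (a : V →L[ℝ] V) :
    a ∈ derivations bV ↔ ∀ x y, a (bV x y) = bV (a x) y + bV x (a y) := Iff.rfl

end Aux2

set_option maxHeartbeats 0 in
set_option synthInstance.maxHeartbeats 1000000 in
/-- Rigidity under the full automorphism group: if
`H¹(ρ*) : H¹(g,g) → H¹(h,g)` is surjective, then the sequence
`Z¹(g,g) → Hom(h,g) → Hom(Λ²h,g)` (precomposition with `ρ` followed by `δ_ρ`) is
exact, and consequently `ρ` is rigid with respect to the action of `Aut(g)` on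
`Hom(h,g)`: every homomorphism `ρ'` sufficiently close to `ρ` is of the form `A ∘ ρ`
for some automorphism `A` of `g` close to the identity. -/
theorem rigidity_under_automorphisms
    {W V : Type*}
    [NormedAddCommGroup W] [NormedSpace ℝ W] [FiniteDimensional ℝ W]
    [NormedAddCommGroup V] [NormedSpace ℝ V] [FiniteDimensional ℝ V]
    (bH : W →L[ℝ] W →L[ℝ] W) (bV : V →L[ℝ] V →L[ℝ] V)
    (hskewH : ∀ u v, bH u v = - bH v u)
    (hjacH : ∀ u v w, bH (bH u v) w + bH (bH v w) u + bH (bH w u) v = 0)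
    (hskewV : ∀ x y, bV x y = - bV y x)
    (hjacV : ∀ x y z, bV (bV x y) z + bV (bV y z) x + bV (bV z x) y = 0)
    (ρ : W →L[ℝ] V)
    (hρ : ∀ u v, ρ (bH u v) = bV (ρ u) (ρ v))
    -- surjectivity of `H¹(ρ*) : H¹(g,g) → H¹(h,g)`
    (hsurj : ∀ ξ : W →L[ℝ] V,
      (∀ u v, ξ (bH u v) = bV (ρ u) (ξ v) - bV (ρ v) (ξ u)) →
      ∃ ω : V →L[ℝ] V, (∀ x y, ω (bV x y) = bV (ω x) y + bV x (ω y)) ∧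
        ∃ x : V, ∀ u, ξ u - ω (ρ u) = bV (ρ u) x) :
    -- exactness of `Z¹(g,g) → Hom(h,g) → Hom(Λ²h,g)`
    (∀ ξ : W →L[ℝ] V,
      (∀ u v, ξ (bH u v) = bV (ρ u) (ξ v) - bV (ρ v) (ξ u)) →
      ∃ ω : V →L[ℝ] V, (∀ x y, ω (bV x y) = bV (ω x) y + bV x (ω y)) ∧
        ∀ u, ξ u = ω (ρ u)) ∧
    -- rigidity under `Aut(g)`
    (∀ ε > (0 : ℝ), ∃ δ > (0 : ℝ), ∀ ρ' : W →L[ℝ] V, ‖ρ' - ρ‖ < δ →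
      (∀ u v, ρ' (bH u v) = bV (ρ' u) (ρ' v)) →
      ∃ A : V ≃L[ℝ] V, (∀ x y, A (bV x y) = bV (A x) (A y)) ∧
        ‖(A : V →L[ℝ] V) - ContinuousLinearMap.id ℝ V‖ < ε ∧
        ∀ u, ρ' u = A (ρ u)) := by
  have hpart1 : ∀ ξ : W →L[ℝ] V,
      (∀ u v, ξ (bH u v) = bV (ρ u) (ξ v) - bV (ρ v) (ξ u)) →
      ∃ ω : V →L[ℝ] V, (∀ x y, ω (bV x y) = bV (ω x) y + bV x (ω y)) ∧
        ∀ u, ξ u = ω (ρ u) := by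
    intro ξ hξ
    obtain ⟨ω, hω, x, hx⟩ := hsurj ξ hξ
    refine ⟨ω + bV.flip x, ?_, ?_⟩
    · intro a b
      simp only [ContinuousLinearMap.add_apply, ContinuousLinearMap.flip_apply, hω, map_add,
        ContinuousLinearMap.add_apply]
      have h1 : bV a (bV b x) = - bV (bV b x) a := hskewV _ _
      have h2 : bV (bV a x) b = - bV (bV x a) b := by rw [hskewV a x]; simp
      have j := hjacV a b x
      have j' : bV (bV a b) x = -(bV (bV b x) a + bV (bV x a) b) := by
        rw [eq_neg_iff_add_eq_zero, ← add_assoc]; exact j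
      rw [h1, h2, j']
      abel
    · intro u
      have := hx u
      simp only [ContinuousLinearMap.add_apply, ContinuousLinearMap.flip_apply]
      rw [← this]; abel
  refine ⟨hpart1, ?_⟩
  classical
  haveI : FiniteDimensional ℝ (W →L[ℝ] V) :=
    (LinearMap.toContinuousLinearMap : (W →ₗ[ℝ] V) ≃ₗ[ℝ] (W →L[ℝ] V)).finiteDimensional
  haveI : FiniteDimensional ℝ (V →L[ℝ] V) :=
    (LinearMap.toContinuousLinearMap : (V →ₗ[ℝ] V) ≃ₗ[ℝ] (V →L[ℝ] V)).finiteDimensional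
  haveI : FiniteDimensional ℝ (W →L[ℝ] W →L[ℝ] V) :=
    (LinearMap.toContinuousLinearMap :
      (W →ₗ[ℝ] (W →L[ℝ] V)) ≃ₗ[ℝ] (W →L[ℝ] (W →L[ℝ] V))).finiteDimensional
  set D := deltaMap bH bV ρ with hDdef
  set T := precompMap ρ with hTdef
  set Z := derivations bV with hZdef
  set K := LinearMap.ker D with hKdef
  -- membership in K ↔ cocycle
  have hKiff : ∀ ξ : W →L[ℝ] V, ξ ∈ K ↔
      ∀ u v, ξ (bH u v) = bV (ρ u) (ξ v) - bV (ρ v) (ξ u) := by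
    intro ξ
    rw [hKdef, LinearMap.mem_ker]
    constructor
    · intro h u v
      have := congrFun (congrArg (fun (f : W →L[ℝ] W →L[ℝ] V) => ⇑(f u)) h) v
      simp only [deltaMap_apply, ContinuousLinearMap.zero_apply] at this
      exact (sub_eq_zero.mp this).symm
    · intro h
      ext u v
      simp only [hDdef, deltaMap_apply, ContinuousLinearMap.zero_apply, h u v]
      abel
  -- derivations restrict to cocycles
  have hTZK : ∀ a ∈ Z, T a ∈ K := by
    intro a ha
    rw [hKiff]
    intro u v
    have hda := (mem_derivations bV a).mp ha
    simp only [hTdef, precompMap_apply]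
    rw [hρ u v, hda (ρ u) (ρ v), hskewV (a (ρ u)) (ρ v)]
    abel
  -- every cocycle comes from a derivation
  have hKTZ : ∀ ξ ∈ K, ∃ a ∈ Z, T a = ξ := by
    intro ξ hξ
    obtain ⟨ω, hω, hωρ⟩ := hpart1 ξ ((hKiff ξ).mp hξ)
    refine ⟨ω, (mem_derivations bV ω).mpr hω, ?_⟩
    ext u
    simp [hTdef, precompMap_apply, (hωρ u).symm]
  -- complement of K
  obtain ⟨C, hC⟩ := Submodule.exists_isCompl K
  -- complement of (Z ⊓ ker T) inside Z
  obtain ⟨Z₀', hZ₀'⟩ := Submodule.exists_isCompl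
    ((LinearMap.ker T ⊓ Z).comap Z.subtype : Submodule ℝ (↥Z))
  set Z₀ : Submodule ℝ (V →L[ℝ] V) := Z₀'.map Z.subtype with hZ₀def
  have hZ₀Z : Z₀ ≤ Z := by
    rw [hZ₀def]; rintro a ⟨b, _, rfl⟩; exact b.2
  have hZ₀inj : ∀ a ∈ Z₀, T a = 0 → a = 0 := by
    intro a haZ₀ haT
    rw [hZ₀def] at haZ₀
    obtain ⟨b, hb, rfl⟩ := haZ₀
    have hbmem : b ∈ ((LinearMap.ker T ⊓ Z).comap Z.subtype : Submodule ℝ (↥Z)) := by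
      simp only [Submodule.mem_comap, Submodule.mem_inf]
      exact ⟨LinearMap.mem_ker.mpr haT, b.2⟩
    have := hZ₀'.disjoint.le_bot (Submodule.mem_inf.mpr ⟨hbmem, hb⟩)
    simp only [Submodule.mem_bot] at this
    rw [this]
    simp
  have hZ₀surj : ∀ ξ ∈ K, ∃ a ∈ Z₀, T a = ξ := by
    intro ξ hξ
    obtain ⟨a, haZ, haT⟩ := hKTZ ξ hξ
    obtain ⟨n, b, hn, hb, hnb⟩ := Submodule.codisjoint_iff_exists_add_eq.mp
      hZ₀'.codisjoint (⟨a, haZ⟩ : ↥Z)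
    refine ⟨(b : V →L[ℝ] V), Submodule.mem_map_of_mem hb, ?_⟩
    have hnker : T ((n : ↥Z) : V →L[ℝ] V) = 0 := by
      have := (Submodule.mem_comap.mp hn).1
      exact LinearMap.mem_ker.mp this
    have hab : ((n : ↥Z) : V →L[ℝ] V) + (b : V →L[ℝ] V) = a := by
      simpa using congrArg (Subtype.val) hnb
    calc T (b : V →L[ℝ] V) = T (↑n + ↑b) - T ↑n := by rw [map_add]; abel
    _ = T a - 0 := by rw [hab, hnker]
    _ = ξ := by rw [haT, sub_zero]
  -- the candidate derivative, as a linear map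
  set Dlin : (↥Z₀ × ↥C) →ₗ[ℝ] (W →L[ℝ] V) :=
    (T ∘ₗ Z₀.subtype).coprod C.subtype with hDlindef
  have hDlin_apply : ∀ pc : ↥Z₀ × ↥C, Dlin pc = T ↑pc.1 + ↑pc.2 := fun pc => rfl
  have hDlin_bij : Function.Bijective Dlin := by
    constructor
    · rw [← LinearMap.ker_eq_bot, LinearMap.ker_eq_bot']
      rintro ⟨p, c⟩ hpc
      rw [hDlin_apply] at hpc
      have hTp : T ↑p ∈ K := hTZK _ (hZ₀Z p.2)
      have hcK : (↑c : W →L[ℝ] V) ∈ K := by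
        have : (↑c : W →L[ℝ] V) = - T ↑p := by
          rw [eq_neg_iff_add_eq_zero, add_comm]; exact hpc
        rw [this]; exact neg_mem hTp
      have hc0 : (↑c : W →L[ℝ] V) = 0 := by
        have := hC.disjoint.le_bot (Submodule.mem_inf.mpr ⟨hcK, c.2⟩)
        simpa using this
      have hp0 : (↑p : V →L[ℝ] V) = 0 := by
        apply hZ₀inj _ p.2
        rw [hc0, add_zero] at hpc
        exact hpc
      simp only [Prod.mk_eq_zero]
      exact ⟨Subtype.ext hp0, Subtype.ext hc0⟩
    · intro ξ
      obtain ⟨k, c, hk, hc', hkc⟩ := Submodule.codisjoint_iff_exists_add_eq.mp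
        hC.codisjoint ξ
      obtain ⟨a, haZ₀, haT⟩ := hZ₀surj k hk
      exact ⟨(⟨⟨a, haZ₀⟩, ⟨c, hc'⟩⟩ : ↥Z₀ × ↥C), by rw [hDlin_apply]; simpa [haT] using hkc⟩
  set elin := LinearEquiv.ofBijective Dlin hDlin_bij with helindef
  set CLE := elin.toContinuousLinearEquiv with hCLEdef
  have hCLE_apply : ∀ pc : ↥Z₀ × ↥C, CLE pc = T ↑pc.1 + ↑pc.2 := by
    intro pc
    rw [hCLEdef, show (elin.toContinuousLinearEquiv) pc = elin pc from
      congrFun (LinearEquiv.coe_toContinuousLinearEquiv' elin) pc, helindef,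
      LinearEquiv.ofBijective_apply]
    exact hDlin_apply pc
  -- the nonlinear map Φ
  set Φ : (↥Z₀ × ↥C) → (W →L[ℝ] V) :=
    fun pc => (exp (↑pc.1 : V →L[ℝ] V)).comp ρ + ↑pc.2 with hΦdef
  have hΦ0 : Φ 0 = ρ := by
    simp [hΦdef, exp_zero]
    rfl
  -- strict derivative of Φ at 0
  have hΦstrict : HasStrictFDerivAt Φ (CLE : (↥Z₀ × ↥C) →L[ℝ] (W →L[ℝ] V)) 0 := by
    set i₁ : (↥Z₀ × ↥C) →L[ℝ] (V →L[ℝ] V) :=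
      Z₀.subtypeL.comp (ContinuousLinearMap.fst ℝ ↥Z₀ ↥C) with hi₁def
    set i₂ : (↥Z₀ × ↥C) →L[ℝ] (W →L[ℝ] V) :=
      C.subtypeL.comp (ContinuousLinearMap.snd ℝ ↥Z₀ ↥C) with hi₂def
    set Rρ : (V →L[ℝ] V) →L[ℝ] (W →L[ℝ] V) :=
      (ContinuousLinearMap.compL ℝ W V V).flip ρ with hRρdef
    have h1 : HasStrictFDerivAt (fun pc : ↥Z₀ × ↥C => (↑pc.1 : V →L[ℝ] V)) i₁ 0 :=
      i₁.hasStrictFDerivAt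
    have h2 : HasStrictFDerivAt (fun pc : ↥Z₀ × ↥C => exp (↑pc.1 : V →L[ℝ] V))
        ((1 : (V →L[ℝ] V) →L[ℝ] (V →L[ℝ] V)).comp i₁) 0 := by
      have he : HasStrictFDerivAt (exp) (1 : (V →L[ℝ] V) →L[ℝ] (V →L[ℝ] V)) 0 :=
        hasStrictFDerivAt_exp_zero
      exact he.comp (𝕜 := ℝ) (x := (0 : ↥Z₀ × ↥C)) h1
    have h3 : HasStrictFDerivAt
        (fun pc : ↥Z₀ × ↥C => (exp (↑pc.1 : V →L[ℝ] V)).comp ρ)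
        (Rρ.comp ((1 : (V →L[ℝ] V) →L[ℝ] (V →L[ℝ] V)).comp i₁)) 0 :=
      Rρ.hasStrictFDerivAt.comp (x := (0 : ↥Z₀ × ↥C)) h2
    have h4 : HasStrictFDerivAt (fun pc : ↥Z₀ × ↥C => (↑pc.2 : W →L[ℝ] V)) i₂ 0 :=
      i₂.hasStrictFDerivAt
    have h5 := h3.add (𝕜 := ℝ) (E := ↥Z₀ × ↥C) (F := W →L[ℝ] V) h4
    have heq : (CLE : (↥Z₀ × ↥C) →L[ℝ] (W →L[ℝ] V))
        = Rρ.comp ((1 : (V →L[ℝ] V) →L[ℝ] (V →L[ℝ] V)).comp i₁) + i₂ := by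
      refine ContinuousLinearMap.ext fun pc => ?_
      rw [ContinuousLinearMap.add_apply, ContinuousLinearEquiv.coe_coe, hCLE_apply pc]
      simp [hRρdef, hi₁def, hi₂def]
      rfl
    rw [heq]
    exact h5
  -- local inverse of Φ
  obtain ⟨g, hginv, hg0, hgcont⟩ : ∃ g : (W →L[ℝ] V) → (↥Z₀ × ↥C),
      (∀ᶠ ρ' in nhds ρ, Φ (g ρ') = ρ') ∧ g ρ = 0 ∧ ContinuousAt g ρ := by
    refine ⟨hΦstrict.localInverse (𝕜 := ℝ) Φ CLE 0, ?_, ?_, ?_⟩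
    · have := hΦstrict.eventually_right_inverse (𝕜 := ℝ) (E := ↥Z₀ × ↥C) (F := W →L[ℝ] V)
      rwa [hΦ0] at this
    · have := hΦstrict.localInverse_apply_image (𝕜 := ℝ) (E := ↥Z₀ × ↥C) (F := W →L[ℝ] V)
      rwa [hΦ0] at this
    · have := hΦstrict.localInverse_continuousAt (𝕜 := ℝ) (E := ↥Z₀ × ↥C) (F := W →L[ℝ] V)
      rwa [hΦ0] at this
  -- quantitative injectivity of D on C
  have hCinj : Function.Injective (D ∘ₗ C.subtype) := by
    rw [← LinearMap.ker_eq_bot, LinearMap.ker_eq_bot']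
    intro c hc
    have hcK : (↑c : W →L[ℝ] V) ∈ K := LinearMap.mem_ker.mpr hc
    have := hC.disjoint.le_bot (Submodule.mem_inf.mpr ⟨hcK, c.2⟩)
    simp only [Submodule.mem_bot] at this
    exact Subtype.ext this
  obtain ⟨Kc, hKc0, hKcle⟩ : ∃ Kc : ℝ, 0 ≤ Kc ∧
      ∀ c : ↥C, ‖(↑c : W →L[ℝ] V)‖ ≤ Kc * ‖D ↑c‖ := by
    have hker : LinearMap.ker (D ∘ₗ C.subtype) = ⊥ := LinearMap.ker_eq_bot.mpr hCinj
    obtain ⟨K₀, hK₀pos, hanti⟩ := LinearMap.exists_antilipschitzWith (𝕜 := ℝ) (E := ↥C)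
      (F := W →L[ℝ] W →L[ℝ] V) (D ∘ₗ C.subtype) hker
    refine ⟨(K₀ : ℝ), K₀.coe_nonneg, fun c => ?_⟩
    have h := hanti.le_mul_dist c 0
    have e1 : dist ((D ∘ₗ C.subtype) c) ((D ∘ₗ C.subtype) 0) = ‖D ↑c‖ := by
      rw [map_zero]
      exact dist_zero_right ((D ∘ₗ C.subtype) c)
    have e0 : ‖(↑c : W →L[ℝ] V)‖ = dist c 0 := (dist_zero_right c).symm
    rw [e1] at h
    rw [e0]
    exact h
  -- the rigidity statement
  intro ε hε
  -- continuity facts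
  have hc_coe1 : Continuous (fun pc : ↥Z₀ × ↥C => (↑pc.1 : V →L[ℝ] V)) :=
    continuous_subtype_val.comp continuous_fst
  have hc_coe2 : Continuous (fun pc : ↥Z₀ × ↥C => (↑pc.2 : W →L[ℝ] V)) :=
    continuous_subtype_val.comp continuous_snd
  have hc1 : ContinuousAt (fun ρ' : W →L[ℝ] V =>
      exp (↑(g ρ').1 : V →L[ℝ] V)) ρ :=
    by letI : NormedAlgebra ℚ (V →L[ℝ] V) := NormedAlgebra.restrictScalars ℚ ℝ _; exact exp_continuous.continuousAt.comp (hc_coe1.continuousAt.comp hgcont)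
  have hval1 : exp (↑(g ρ).1 : V →L[ℝ] V) = 1 := by
    rw [hg0]
    simp
  have hev1 : ∀ᶠ ρ' in nhds ρ, ‖exp (↑(g ρ').1 : V →L[ℝ] V) - 1‖ < ε := by
    have hF1 : ContinuousAt (fun ρ' : W →L[ℝ] V =>
        ‖exp (↑(g ρ').1 : V →L[ℝ] V) - 1‖) ρ := (hc1.sub continuousAt_const).norm
    have ht : Filter.Tendsto (fun ρ' : W →L[ℝ] V =>
        ‖exp (↑(g ρ').1 : V →L[ℝ] V) - 1‖) (nhds ρ) (nhds 0) := by
      have := hF1.tendsto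
      rwa [hval1, sub_self, norm_zero] at this
    exact ht.eventually_lt_const hε
  have hc2 : ContinuousAt (fun ρ' : W →L[ℝ] V =>
      (exp (↑(g ρ').1 : V →L[ℝ] V)).comp ρ) ρ :=
    (((ContinuousLinearMap.compL ℝ W V V).flip ρ).continuous.continuousAt).comp hc1
  have hev2 : ∀ᶠ ρ' in nhds ρ, Kc * (2 * ‖bV‖ *
      ‖(exp (↑(g ρ').1 : V →L[ℝ] V)).comp ρ - ρ‖ +
      ‖bV‖ * ‖(↑(g ρ').2 : W →L[ℝ] V)‖) < 1 := by
    have hF2 : ContinuousAt (fun ρ' : W →L[ℝ] V => Kc * (2 * ‖bV‖ *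
        ‖(exp (↑(g ρ').1 : V →L[ℝ] V)).comp ρ - ρ‖ +
        ‖bV‖ * ‖(↑(g ρ').2 : W →L[ℝ] V)‖)) ρ := by
      refine continuousAt_const.mul (ContinuousAt.add ?_ ?_)
      · exact continuousAt_const.mul (hc2.sub continuousAt_const).norm
      · exact continuousAt_const.mul
          ((hc_coe2.continuousAt.comp hgcont).norm)
    have hval2 : Kc * (2 * ‖bV‖ *
        ‖(exp (↑(g ρ).1 : V →L[ℝ] V)).comp ρ - ρ‖ +
        ‖bV‖ * ‖(↑(g ρ).2 : W →L[ℝ] V)‖) = 0 := by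
      rw [hval1, hg0]
      simp [ContinuousLinearMap.one_def, ContinuousLinearMap.id_comp]
    have ht := hF2.tendsto
    rw [hval2] at ht
    exact ht.eventually_lt_const one_pos
  have hevAll := hginv.and (hev1.and hev2)
  rw [Metric.eventually_nhds_iff] at hevAll
  obtain ⟨δ, hδpos, hball⟩ := hevAll
  refine ⟨δ, hδpos, ?_⟩
  intro ρ' hρ'near hρ'hom
  obtain ⟨hinv, hlt1, hlt2⟩ := hball (show dist ρ' ρ < δ by rwa [dist_eq_norm])
  simp only [hΦdef] at hinv
  set p : ↥Z₀ := (g ρ').1 with hpdef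
  set c : ↥C := (g ρ').2 with hcdef
  obtain ⟨σ, hσdef⟩ : ∃ σ : W →L[ℝ] V, σ = (exp (↑p : V →L[ℝ] V)).comp ρ := ⟨_, rfl⟩
  rw [← hσdef] at hlt2
  have hσρ' : σ + (↑c : W →L[ℝ] V) = ρ' := by rw [hσdef]; exact hinv
  have hderp : ∀ x y, (↑p : V →L[ℝ] V) (bV x y)
      = bV ((↑p : V →L[ℝ] V) x) y + bV x ((↑p : V →L[ℝ] V) y) :=
    (mem_derivations bV _).mp (hZ₀Z p.2)
  have hσhom : ∀ u v, σ (bH u v) = bV (σ u) (σ v) := by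
    intro u v
    rw [hσdef]
    simp only [ContinuousLinearMap.comp_apply]
    rw [hρ u v]
    exact exp_derivation bV ↑p hderp (ρ u) (ρ v)
  have hcval : ∀ w, (↑c : W →L[ℝ] V) w = ρ' w - σ w := by
    intro w
    rw [← hσρ']
    simp only [ContinuousLinearMap.add_apply]
    abel
  have hDc : ∀ u v, D ↑c u v
      = bV ((ρ - σ) u) ((↑c : W →L[ℝ] V) v) + bV ((σ - ρ) v) ((↑c : W →L[ℝ] V) u)
        - bV ((↑c : W →L[ℝ] V) u) ((↑c : W →L[ℝ] V) v) := by
    intro u v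
    rw [hDdef, deltaMap_apply]
    simp only [hcval, map_sub, ContinuousLinearMap.sub_apply]
    rw [hρ'hom u v, hσhom u v]
    rw [hskewV (σ v) (ρ' u), hskewV (σ v) (σ u)]
    abel
  have hDb : ‖D ↑c‖ ≤ (2 * ‖bV‖ * ‖σ - ρ‖ + ‖bV‖ * ‖(↑c : W →L[ℝ] V)‖)
      * ‖(↑c : W →L[ℝ] V)‖ := by
    apply ContinuousLinearMap.opNorm_le_bound _ (by positivity)
    intro u
    apply ContinuousLinearMap.opNorm_le_bound _ (by positivity)
    intro v
    rw [hDc u v]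
    have e1 : ‖(ρ - σ) u‖ ≤ ‖σ - ρ‖ * ‖u‖ := by
      rw [norm_sub_rev σ ρ]
      exact (ρ - σ).le_opNorm u
    have e2 : ‖(σ - ρ) v‖ ≤ ‖σ - ρ‖ * ‖v‖ := (σ - ρ).le_opNorm v
    have e3 : ‖(↑c : W →L[ℝ] V) u‖ ≤ ‖(↑c : W →L[ℝ] V)‖ * ‖u‖ :=
      (↑c : W →L[ℝ] V).le_opNorm u
    have e4 : ‖(↑c : W →L[ℝ] V) v‖ ≤ ‖(↑c : W →L[ℝ] V)‖ * ‖v‖ :=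
      (↑c : W →L[ℝ] V).le_opNorm v
    have h1 : ‖bV ((ρ - σ) u) ((↑c : W →L[ℝ] V) v)‖
        ≤ ‖bV‖ * (‖σ - ρ‖ * ‖u‖) * (‖(↑c : W →L[ℝ] V)‖ * ‖v‖) := by
      refine (bV.le_opNorm₂ _ _).trans ?_
      gcongr
    have h2 : ‖bV ((σ - ρ) v) ((↑c : W →L[ℝ] V) u)‖
        ≤ ‖bV‖ * (‖σ - ρ‖ * ‖v‖) * (‖(↑c : W →L[ℝ] V)‖ * ‖u‖) := by
      refine (bV.le_opNorm₂ _ _).trans ?_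
      gcongr
    have h3 : ‖bV ((↑c : W →L[ℝ] V) u) ((↑c : W →L[ℝ] V) v)‖
        ≤ ‖bV‖ * (‖(↑c : W →L[ℝ] V)‖ * ‖u‖) * (‖(↑c : W →L[ℝ] V)‖ * ‖v‖) := by
      refine (bV.le_opNorm₂ _ _).trans ?_
      gcongr
    have tri : ‖bV ((ρ - σ) u) ((↑c : W →L[ℝ] V) v) + bV ((σ - ρ) v) ((↑c : W →L[ℝ] V) u)
        - bV ((↑c : W →L[ℝ] V) u) ((↑c : W →L[ℝ] V) v)‖
        ≤ ‖bV ((ρ - σ) u) ((↑c : W →L[ℝ] V) v)‖ + ‖bV ((σ - ρ) v) ((↑c : W →L[ℝ] V) u)‖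
          + ‖bV ((↑c : W →L[ℝ] V) u) ((↑c : W →L[ℝ] V) v)‖ :=
      (norm_sub_le _ _).trans (add_le_add_left (norm_add_le _ _) _)
    linarith [tri, h1, h2, h3]
  have hfin : ‖(↑c : W →L[ℝ] V)‖
      ≤ (Kc * (2 * ‖bV‖ * ‖σ - ρ‖ + ‖bV‖ * ‖(↑c : W →L[ℝ] V)‖))
        * ‖(↑c : W →L[ℝ] V)‖ := by
    calc ‖(↑c : W →L[ℝ] V)‖ ≤ Kc * ‖D ↑c‖ := hKcle c
    _ ≤ Kc * ((2 * ‖bV‖ * ‖σ - ρ‖ + ‖bV‖ * ‖(↑c : W →L[ℝ] V)‖)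
        * ‖(↑c : W →L[ℝ] V)‖) := by
      exact mul_le_mul_of_nonneg_left hDb hKc0
    _ = _ := by ring
  have hczero : (↑c : W →L[ℝ] V) = 0 := by
    by_contra hne
    have hpos : 0 < ‖(↑c : W →L[ℝ] V)‖ := norm_pos_iff.mpr hne
    have := mul_lt_mul_of_pos_right hlt2 hpos
    rw [one_mul] at this
    linarith
  have hρ'σ : ρ' = σ := by rw [← hσρ', hczero, add_zero]
  set A : V ≃L[ℝ] V := expAut (↑p : V →L[ℝ] V) with hAdef
  have hA : (A : V →L[ℝ] V) = exp (↑p : V →L[ℝ] V) := expAut_coe _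
  have hAapp : ∀ x, A x = exp (↑p : V →L[ℝ] V) x := by
    intro x
    rw [← ContinuousLinearEquiv.coe_coe, hA]
  refine ⟨A, ?_, ?_, ?_⟩
  · intro x y
    rw [hAapp, hAapp, hAapp]
    exact exp_derivation bV ↑p hderp x y
  · have : (A : V →L[ℝ] V) - ContinuousLinearMap.id ℝ V
        = exp (↑p : V →L[ℝ] V) - 1 := by rw [hA]; rfl
    rw [this]
    exact hlt1
  · intro u
    rw [hρ'σ, hAapp, hσdef]
    rfl
end
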